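/- arXiv:1902.06136 — 5 statements merged into one kernel-verified Lean document; each statement's English description precedes it below -/
import Mathlib

section
/- Let A be a finitely generated ℤ-graded commutative K-algebra over a field K of characteristic zero. If A admits a nonzero locally nilpotent derivation, then A admits a nonzero ℤ-homogeneous locally nilpotent derivation. -/
/-!
Split `D` into its homogeneous components `D_d`, `D_d a = proj (i + d) (D a)` for `a` of degree
`i`. Finite generation leaves only finitely many `D_d ≠ 0`, so there is a largest such `t`. For
`a` of degree `i`, no component of `Dⁿ a` lies above degree `i + n t`, and the one in that degree
is `D_tⁿ a`; hence `Dⁿ a = 0` forces `D_tⁿ a = 0`, and `D_t` is a nonzero homogeneous LND.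
-/

/-- A derivation is locally nilpotent if every element is annihilated by some power. -/
def IsLND {K A : Type*} [CommSemiring K] [CommRing A] [Algebra K A]
    (D : Derivation K A A) : Prop :=
  ∀ a : A, ∃ n : ℕ, (⇑D)^[n] a = 0

/-- A derivation of a graded algebra is homogeneous of degree `d` if it shifts degrees by `d`. -/
def IsHomogDeriv {K A ι : Type*} [CommSemiring K] [CommRing A] [Algebra K A] [Add ι]
    (𝒜 : ι → Submodule K A) (D : Derivation K A A) (d : ι) : Prop :=
  ∀ (i : ι) (a : A), a ∈ 𝒜 i → D a ∈ 𝒜 (i + d)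

open DirectSum GradedAlgebra

namespace Derivation

variable {K A ι : Type*} [CommSemiring K] [CommRing A] [Algebra K A]
  (𝒜 : ι → Submodule K A) (D : Derivation K A A)

section AddCommGroup

variable [AddCommGroup ι] [DecidableEq ι] [GradedAlgebra 𝒜]

noncomputable def homogeneousComponentLinearMap (d : ι) : A →ₗ[K] A :=
  toModule K ι A (fun i => proj 𝒜 (i + d) ∘ₗ D.toLinearMap ∘ₗ (𝒜 i).subtype) ∘ₗ
    (decomposeAlgEquiv 𝒜).toLinearMap

theorem homogeneousComponentLinearMap_apply_of_mem {i : ι} {a : A} (ha : a ∈ 𝒜 i) (d : ι) :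
    D.homogeneousComponentLinearMap 𝒜 d a = proj 𝒜 (i + d) (D a) := by
  lift a to 𝒜 i using ha
  simp [homogeneousComponentLinearMap, decomposeAlgEquiv_apply, ← lof_eq_of K]

theorem homogeneousComponentLinearMap_leibniz (d : ι) (a b : A) :
    D.homogeneousComponentLinearMap 𝒜 d (a * b) =
      a • D.homogeneousComponentLinearMap 𝒜 d b + b • D.homogeneousComponentLinearMap 𝒜 d a := by
  induction a using Decomposition.inductionOn 𝒜 with
  | zero => simp
  | add a a' ha ha' => simp only [add_mul, map_add, ha, ha', smul_eq_mul]; ring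
  | @homogeneous i a =>
    induction b using Decomposition.inductionOn 𝒜 with
    | zero => simp
    | add b b' hb hb' => simp only [mul_add, map_add, hb, hb', smul_eq_mul]; ring
    | @homogeneous j b =>
      simp only [homogeneousComponentLinearMap_apply_of_mem 𝒜 D (SetLike.mul_mem_graded a.2 b.2),
        homogeneousComponentLinearMap_apply_of_mem 𝒜 D a.2,
        homogeneousComponentLinearMap_apply_of_mem 𝒜 D b.2, leibniz, smul_eq_mul, map_add,
        proj_apply]
      rw [add_assoc, coe_decompose_mul_add_of_left_mem 𝒜 a.2,
        show i + (j + d) = j + (i + d) by abel, coe_decompose_mul_add_of_left_mem 𝒜 b.2]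

noncomputable def homogeneousComponent (d : ι) : Derivation K A A :=
  .mk' (D.homogeneousComponentLinearMap 𝒜 d) (D.homogeneousComponentLinearMap_leibniz 𝒜 d)

theorem homogeneousComponent_apply_of_mem {i : ι} {a : A} (ha : a ∈ 𝒜 i) (d : ι) :
    D.homogeneousComponent 𝒜 d a = proj 𝒜 (i + d) (D a) :=
  D.homogeneousComponentLinearMap_apply_of_mem 𝒜 ha d

theorem isHomogDeriv_homogeneousComponent (d : ι) :
    IsHomogDeriv 𝒜 (D.homogeneousComponent 𝒜 d) d := fun i a ha => by
  rw [homogeneousComponent_apply_of_mem 𝒜 D ha]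
  exact (decompose 𝒜 (D a) (i + d)).2

theorem finite_setOf_homogeneousComponent_apply_ne_zero (a : A) :
    {d | D.homogeneousComponent 𝒜 d a ≠ 0}.Finite := by
  induction a using Decomposition.inductionOn 𝒜 with
  | zero => simp
  | add a a' ha ha' =>
    refine (ha.union ha').subset fun d hd => ?_
    contrapose! hd
    simp_all
  | @homogeneous i a =>
    simp_rw [homogeneousComponent_apply_of_mem 𝒜 D a.2, proj_apply, ne_eq,
      ZeroMemClass.coe_eq_zero]
    exact (DFinsupp.finite_support _).preimage (add_right_injective i).injOn

theorem finite_setOf_homogeneousComponent_ne_zero [Algebra.FiniteType K A] :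
    {d | D.homogeneousComponent 𝒜 d ≠ 0}.Finite := by
  obtain ⟨s, hs⟩ := Algebra.FiniteType.out (R := K) (A := A)
  refine (s.finite_toSet.biUnion fun a _ =>
    D.finite_setOf_homogeneousComponent_apply_ne_zero 𝒜 a).subset fun d hd => ?_
  contrapose! hd
  simp only [Set.mem_iUnion, Set.mem_ofPred, not_exists, not_not] at hd ⊢
  exact ext_of_adjoin_eq_top _ hs fun a ha => by simpa using hd a ha

theorem exists_homogeneousComponent_ne_zero (hD : D ≠ 0) :
    ∃ d, D.homogeneousComponent 𝒜 d ≠ 0 := by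
  contrapose! hD
  ext a
  induction a using Decomposition.inductionOn 𝒜 with
  | zero => simp
  | add a a' ha ha' => simp_all
  | @homogeneous i a =>
    refine (decompose 𝒜).injective (DFinsupp.ext fun j => Subtype.ext ?_)
    have := D.homogeneousComponent_apply_of_mem 𝒜 a.2 (j - i)
    rw [hD, add_sub_cancel, proj_apply] at this
    simpa using this.symm

theorem isLND_of_forall_mem {E : Derivation K A A} (h : ∀ i, ∀ a ∈ 𝒜 i, ∃ n, (⇑E)^[n] a = 0) :
    IsLND E := by
  intro a
  induction a using Decomposition.inductionOn 𝒜 with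
  | zero => exact ⟨0, rfl⟩
  | @homogeneous i a => exact h i a a.2
  | add a a' ha ha' =>
    obtain ⟨n, hn⟩ := ha
    obtain ⟨n', hn'⟩ := ha'
    refine ⟨n + n', ?_⟩
    rw [iterate_map_add, add_comm n, Function.iterate_add_apply, hn, iterate_map_zero, zero_add,
      add_comm n', Function.iterate_add_apply, hn', iterate_map_zero]

end AddCommGroup

section LinearOrder

variable [AddCommGroup ι] [LinearOrder ι] [IsOrderedAddMonoid ι] [GradedAlgebra 𝒜]
  {D} {t : ι}

theorem proj_map_of_forall_proj_eq_zero
    (htop : ∀ d, t < d → D.homogeneousComponent 𝒜 d = 0) {m : ι} {x : A}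
    (hx : ∀ j, m < j → proj 𝒜 j x = 0) :
    (∀ j, m + t < j → proj 𝒜 j (D x) = 0) ∧
      proj 𝒜 (m + t) (D x) = D.homogeneousComponent 𝒜 t (proj 𝒜 m x) := by
  classical
  have hsum (j : ι) : proj 𝒜 j (D x) =
      ∑ i ∈ (decompose 𝒜 x).support, D.homogeneousComponent 𝒜 (j - i) (proj 𝒜 i x) := by
    conv_lhs => rw [← sum_support_decompose 𝒜 x]
    simp only [map_sum]
    refine Finset.sum_congr rfl fun i _ => ?_
    have := D.homogeneousComponent_apply_of_mem 𝒜 (decompose 𝒜 x i).2 (j - i)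
    rwa [add_sub_cancel, eq_comm] at this
  have hterm (j i : ι) (h : m < i ∨ i + t < j) :
      D.homogeneousComponent 𝒜 (j - i) (proj 𝒜 i x) = 0 := by
    rcases h with h | h
    · rw [hx i h, map_zero]
    · rw [htop (j - i) (lt_sub_iff_add_lt'.2 h), zero_apply]
  refine ⟨fun j hj => ?_, ?_⟩
  · rw [hsum]
    refine Finset.sum_eq_zero fun i _ => hterm j i ?_
    rcases lt_or_ge m i with h | h
    · exact .inl h
    · exact .inr ((show i + t ≤ m + t by gcongr).trans_lt hj)
  · rw [hsum, Finset.sum_eq_single m (fun i _ hi => hterm _ i ?_) (fun hm => ?_),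
      add_sub_cancel_left]
    · rcases hi.lt_or_gt with h | h
      · exact .inr (by gcongr)
      · exact .inl h
    · rw [proj_apply, DFinsupp.notMem_support_iff.1 hm, ZeroMemClass.coe_zero, map_zero]

theorem proj_iterate_of_mem (htop : ∀ d, t < d → D.homogeneousComponent 𝒜 d = 0)
    {i : ι} {a : A} (ha : a ∈ 𝒜 i) (n : ℕ) :
    (∀ j, i + n • t < j → proj 𝒜 j ((⇑D)^[n] a) = 0) ∧
      proj 𝒜 (i + n • t) ((⇑D)^[n] a) = (⇑(D.homogeneousComponent 𝒜 t))^[n] a := by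
  induction n with
  | zero =>
    simp only [zero_smul, add_zero, Function.iterate_zero, id]
    exact ⟨fun j hj => decompose_of_mem_ne 𝒜 ha hj.ne, decompose_of_mem_same 𝒜 ha⟩
  | succ n ih =>
    obtain ⟨hlt, heq⟩ := proj_map_of_forall_proj_eq_zero 𝒜 htop ih.1
    rw [succ_nsmul, ← add_assoc, Function.iterate_succ_apply', Function.iterate_succ_apply',
      ← ih.2]
    exact ⟨hlt, heq⟩

theorem isLND_homogeneousComponent (htop : ∀ d, t < d → D.homogeneousComponent 𝒜 d = 0)
    (hD : IsLND D) : IsLND (D.homogeneousComponent 𝒜 t) :=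
  isLND_of_forall_mem 𝒜 fun i a ha => by
    obtain ⟨n, hn⟩ := hD a
    exact ⟨n, by rw [← (proj_iterate_of_mem 𝒜 htop ha n).2, hn, map_zero]⟩

end LinearOrder

theorem exists_max_homogeneousComponent_ne_zero [AddCommGroup ι] [LinearOrder ι]
    [GradedAlgebra 𝒜] [Algebra.FiniteType K A] (hD : D ≠ 0) :
    ∃ t, D.homogeneousComponent 𝒜 t ≠ 0 ∧ ∀ d, t < d → D.homogeneousComponent 𝒜 d = 0 := by
  obtain ⟨t, ht⟩ := (D.finite_setOf_homogeneousComponent_ne_zero 𝒜).exists_maximal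
    (D.exists_homogeneousComponent_ne_zero 𝒜 hD)
  refine ⟨t, ht.prop, fun d hd => ?_⟩
  by_contra h
  exact hd.not_ge (ht.2 h hd.le)

end Derivation

theorem stmt3_general {K A : Type*} [Field K] [CommRing A] [Algebra K A]
    [Algebra.FiniteType K A]
    (𝒜 : ℤ → Submodule K A) [GradedAlgebra 𝒜]
    (h : ∃ D : Derivation K A A, D ≠ 0 ∧ IsLND D) :
    ∃ (d : ℤ) (D : Derivation K A A), D ≠ 0 ∧ IsLND D ∧ IsHomogDeriv 𝒜 D d := by
  obtain ⟨D, hD0, hD⟩ := h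
  obtain ⟨t, ht, htop⟩ := D.exists_max_homogeneousComponent_ne_zero 𝒜 hD0
  exact ⟨t, D.homogeneousComponent 𝒜 t, ht, Derivation.isLND_homogeneousComponent 𝒜 htop hD,
    D.isHomogDeriv_homogeneousComponent 𝒜 t⟩

theorem stmt3 {K A : Type*} [Field K] [CharZero K] [CommRing A] [Algebra K A]
    [Algebra.FiniteType K A]
    (𝒜 : ℤ → Submodule K A) [GradedAlgebra 𝒜]
    (h : ∃ D : Derivation K A A, D ≠ 0 ∧ IsLND D) :
    ∃ (d : ℤ) (D : Derivation K A A), D ≠ 0 ∧ IsLND D ∧ IsHomogDeriv 𝒜 D d :=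
  stmt3_general 𝒜 h
end

section
/- Let K be an algebraically closed field of characteristic zero. The algebra K[x,y,z] with the derivation δ defined by δ(x) = ∂g/∂z, δ(z) = −∂f/∂x, δ(y) = 0, where f = x^a is a monomial in x and g = z^c a monomial in z, induces a nonzero locally nilpotent derivation on A = K[x,y,z]/(x^a + y^b + z^c) whenever a = 1. More generally: for a trinomial hypersurface X = V(T_0^{l_0} + T_1^{l_1} + T_2^{l_2}) in which some exponent l_{11} = 1, the derivation δ with δ(T_{11}) = ∂T_2^{l_2}/∂T_{21}, δ(T_{21}) = −∂T_1^{l_1}/∂T_{11}, and δ(T_{pq}) = 0 for all other variables, is a well-defined nonzero locally nilpotent derivation of K[X]; hence X is not rigid. -/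
set_option synthInstance.maxHeartbeats 1000000
set_option maxHeartbeats 1000000

open MvPolynomial

/-- Index set of the variables `T_{0j}, T_{1j}, T_{2j}` of a trinomial hypersurface. -/
abbrev TriIdx (n0 n1 n2 : ℕ) : Type :=
  Fin n0 ⊕ (Fin (n1 + 1) ⊕ Fin (n2 + 1))

section Aux
variable {K A : Type*} [CommSemiring K] [CommRing A] [Algebra K A] (D : Derivation K A A)

lemma iterD_zero (n : ℕ) : (⇑D)^[n] (0 : A) = 0 := by
  induction n with
  | zero => rfl
  | succ n ih => rw [Function.iterate_succ_apply, map_zero, ih]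

lemma iterD_add (n : ℕ) (p q : A) : (⇑D)^[n] (p + q) = (⇑D)^[n] p + (⇑D)^[n] q := by
  induction n generalizing p q with
  | zero => rfl
  | succ n ih => simp only [Function.iterate_succ_apply, map_add, ih]

lemma iterD_stable {n : ℕ} {p : A} (h : (⇑D)^[n] p = 0) {m : ℕ} (hm : n ≤ m) :
    (⇑D)^[m] p = 0 := by
  obtain ⟨k, rfl⟩ := Nat.exists_eq_add_of_le hm
  rw [Nat.add_comm, Function.iterate_add_apply, h, iterD_zero]

lemma iterD_mul {p q : A} {a b : ℕ} (hp : (⇑D)^[a] p = 0) (hq : (⇑D)^[b] q = 0) :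
    (⇑D)^[a + b] (p * q) = 0 := by
  have key : ∀ n : ℕ, (⇑D)^[n] (p * q) ∈
      Submodule.span K {x : A | ∃ i j : ℕ, i + j = n ∧ x = (⇑D)^[i] p * (⇑D)^[j] q} := by
    intro n
    induction n with
    | zero => exact Submodule.subset_span ⟨0, 0, rfl, rfl⟩
    | succ n ih =>
      rw [Function.iterate_succ_apply']
      refine Submodule.span_induction ?_ ?_ ?_ ?_ ih
      · rintro x ⟨i, j, hij, rfl⟩
        rw [Derivation.leibniz, smul_eq_mul, smul_eq_mul]
        refine Submodule.add_mem _ (Submodule.subset_span ?_) (Submodule.subset_span ?_)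
        · exact ⟨i, j + 1, by omega, by rw [Function.iterate_succ_apply']⟩
        · exact ⟨i + 1, j, by omega, by rw [Function.iterate_succ_apply', mul_comm]⟩
      · rw [map_zero]; exact Submodule.zero_mem _
      · intro x y _ _ hx hy
        rw [map_add]; exact Submodule.add_mem _ hx hy
      · intro c x _ hx
        rw [Derivation.map_smul]; exact Submodule.smul_mem _ _ hx
  have hle : Submodule.span K {x : A | ∃ i j : ℕ, i + j = a + b ∧
      x = (⇑D)^[i] p * (⇑D)^[j] q} ≤ ⊥ := by
    rw [Submodule.span_le]
    rintro x ⟨i, j, hij, rfl⟩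
    simp only [SetLike.mem_coe, Submodule.mem_bot]
    rcases le_or_gt a i with h | h
    · rw [iterD_stable D hp h, zero_mul]
    · rw [iterD_stable D hq (by omega), mul_zero]
  simpa using hle (key (a + b))

lemma iterD_exists_mul {p q : A} (hp : ∃ n, (⇑D)^[n] p = 0) (hq : ∃ n, (⇑D)^[n] q = 0) :
    ∃ n, (⇑D)^[n] (p * q) = 0 := by
  obtain ⟨a, ha⟩ := hp; obtain ⟨b, hb⟩ := hq
  exact ⟨a + b, iterD_mul D ha hb⟩

lemma iterD_exists_pow {p : A} (hp : ∃ n, (⇑D)^[n] p = 0) (k : ℕ) :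
    ∃ n, (⇑D)^[n] (p ^ k) = 0 := by
  induction k with
  | zero => exact ⟨1, by simpa using D.map_one_eq_zero⟩
  | succ k ih => rw [pow_succ]; exact iterD_exists_mul D ih hp

lemma dprod_zero {κ : Type*} (s : Finset κ) (f : κ → A) (e : κ → ℕ)
    (h : ∀ j ∈ s, D (f j) = 0) : D (∏ j ∈ s, f j ^ e j) = 0 := by
  refine Finset.prod_induction _ (fun x => D x = 0) (fun x y hx hy => ?_) D.map_one_eq_zero
    (fun x hx => ?_)
  · show D (x * y) = 0
    rw [Derivation.leibniz, hx, hy, smul_zero, smul_zero, add_zero]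
  · show D (f x ^ e x) = 0
    rw [Derivation.leibniz_pow, h x hx, smul_zero, smul_zero]

end Aux

theorem stmt8 {K : Type*} [Field K] [IsAlgClosed K] [CharZero K]
    (n0 n1 n2 : ℕ)
    (l0 : Fin n0 → ℕ) (l1 : Fin (n1 + 1) → ℕ) (l2 : Fin (n2 + 1) → ℕ)
    (hl0 : ∀ j, 0 < l0 j) (hl1 : ∀ j, 0 < l1 j) (hl2 : ∀ j, 0 < l2 j)
    (h11 : l1 0 = 1)
    (T0 T1 T2 : MvPolynomial (TriIdx n0 n1 n2) K)
    (hT0 : T0 = ∏ j, X (Sum.inl j) ^ l0 j)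
    (hT1 : T1 = ∏ j, X (Sum.inr (Sum.inl j)) ^ l1 j)
    (hT2 : T2 = ∏ j, X (Sum.inr (Sum.inr j)) ^ l2 j)
    (I : Ideal (MvPolynomial (TriIdx n0 n1 n2) K))
    (hI : I = Ideal.span {T0 + T1 + T2}) :
    ∃ δ : Derivation K (MvPolynomial (TriIdx n0 n1 n2) K ⧸ I)
        (MvPolynomial (TriIdx n0 n1 n2) K ⧸ I),
      δ ≠ 0 ∧ IsLND δ ∧
      δ (Ideal.Quotient.mk I (X (Sum.inr (Sum.inl 0)))) =
        Ideal.Quotient.mk I (pderiv (Sum.inr (Sum.inr 0)) T2) ∧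
      δ (Ideal.Quotient.mk I (X (Sum.inr (Sum.inr 0)))) =
        Ideal.Quotient.mk I (-(pderiv (Sum.inr (Sum.inl 0)) T1)) ∧
      (∀ j : Fin n0, δ (Ideal.Quotient.mk I (X (Sum.inl j))) = 0) ∧
      (∀ j : Fin (n1 + 1), j ≠ 0 →
        δ (Ideal.Quotient.mk I (X (Sum.inr (Sum.inl j)))) = 0) ∧
      (∀ j : Fin (n2 + 1), j ≠ 0 →
        δ (Ideal.Quotient.mk I (X (Sum.inr (Sum.inr j)))) = 0) := by
  classical
  set i11 : TriIdx n0 n1 n2 := Sum.inr (Sum.inl 0) with hi11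
  set i21 : TriIdx n0 n1 n2 := Sum.inr (Sum.inr 0) with hi21
  set A1 : MvPolynomial (TriIdx n0 n1 n2) K :=
    ∏ j ∈ Finset.univ.erase (0 : Fin (n1 + 1)), X (Sum.inr (Sum.inl j)) ^ l1 j with hA1
  set A2 : MvPolynomial (TriIdx n0 n1 n2) K :=
    ∏ j ∈ Finset.univ.erase (0 : Fin (n2 + 1)), X (Sum.inr (Sum.inr j)) ^ l2 j with hA2
  -- A1, A2 are killed by any derivation vanishing on the relevant variables
  have hdA1 : ∀ d : Derivation K (MvPolynomial (TriIdx n0 n1 n2) K)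
      (MvPolynomial (TriIdx n0 n1 n2) K),
      (∀ j : Fin (n1 + 1), j ≠ 0 → d (X (Sum.inr (Sum.inl j))) = 0) → d A1 = 0 := by
    intro d hd
    rw [hA1]
    exact dprod_zero d _ _ _ fun j hj => hd j (Finset.mem_erase.1 hj).1
  have hdA2 : ∀ d : Derivation K (MvPolynomial (TriIdx n0 n1 n2) K)
      (MvPolynomial (TriIdx n0 n1 n2) K),
      (∀ j : Fin (n2 + 1), j ≠ 0 → d (X (Sum.inr (Sum.inr j))) = 0) → d A2 = 0 := by
    intro d hd
    rw [hA2]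
    exact dprod_zero d _ _ _ fun j hj => hd j (Finset.mem_erase.1 hj).1
  have hT1' : T1 = X i11 * A1 := by
    rw [hT1, ← Finset.mul_prod_erase Finset.univ _ (Finset.mem_univ (0 : Fin (n1 + 1))), h11,
      pow_one, hA1, hi11]
  have hT2' : T2 = X i21 ^ l2 0 * A2 := by
    rw [hT2, ← Finset.mul_prod_erase Finset.univ _ (Finset.mem_univ (0 : Fin (n2 + 1))), hA2, hi21]
  have hP1 : pderiv i11 T1 = A1 := by
    rw [hT1', Derivation.leibniz, hdA1 (pderiv i11) fun j hj =>
      pderiv_X_of_ne (by simp [hi11, hj]), pderiv_X_self, smul_zero, zero_add, smul_eq_mul,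
      mul_one]
  have hpA2 : pderiv i21 A2 = 0 :=
    hdA2 (pderiv i21) fun j hj => pderiv_X_of_ne (by simp [hi21, hj])
  have hP2 : pderiv i21 T2 =
      A2 * ((l2 0 : MvPolynomial (TriIdx n0 n1 n2) K) * X i21 ^ (l2 0 - 1)) := by
    rw [hT2', Derivation.leibniz, hpA2, smul_zero, zero_add, Derivation.leibniz_pow,
      pderiv_X_self]
    simp only [smul_eq_mul, nsmul_eq_mul, mul_one]
  -- the derivation on the polynomial ring
  set v : TriIdx n0 n1 n2 → MvPolynomial (TriIdx n0 n1 n2) K :=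
    Sum.elim (fun _ => 0)
      (Sum.elim (fun j => if j = 0 then pderiv i21 T2 else 0)
        (fun j => if j = 0 then -(pderiv i11 T1) else 0)) with hv
  set D : Derivation K (MvPolynomial (TriIdx n0 n1 n2) K) (MvPolynomial (TriIdx n0 n1 n2) K) :=
    mkDerivation K v with hD
  have hDX : ∀ i, D (X i) = v i := fun i => mkDerivation_X K v i
  have hD0 : ∀ j : Fin n0, D (X (Sum.inl j)) = 0 := fun j => by
    rw [hDX]; simp [hv]
  have hD1 : ∀ j : Fin (n1 + 1), j ≠ 0 → D (X (Sum.inr (Sum.inl j))) = 0 := fun j hj => by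
    rw [hDX]; simp [hv, hj]
  have hD2 : ∀ j : Fin (n2 + 1), j ≠ 0 → D (X (Sum.inr (Sum.inr j))) = 0 := fun j hj => by
    rw [hDX]; simp [hv, hj]
  have hD11 : D (X i11) = pderiv i21 T2 := by
    rw [hi11, hDX]; simp [hv]
  have hD21 : D (X i21) = -(pderiv i11 T1) := by
    rw [hi21, hDX]; simp [hv]
  have hDA1 : D A1 = 0 := hdA1 D hD1
  have hDA2 : D A2 = 0 := hdA2 D hD2
  have hDT0 : D T0 = 0 := by
    rw [hT0]; exact dprod_zero D _ _ _ fun j _ => hD0 j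
  have hDT1 : D T1 = A1 * pderiv i21 T2 := by
    rw [hT1', Derivation.leibniz, hDA1, hD11, smul_zero, zero_add, smul_eq_mul]
  have hDT2 : D T2 = A2 * ((l2 0 : MvPolynomial (TriIdx n0 n1 n2) K) * X i21 ^ (l2 0 - 1) *
      -(pderiv i11 T1)) := by
    rw [hT2', Derivation.leibniz, hDA2, smul_zero, zero_add, Derivation.leibniz_pow, hD21]
    simp only [smul_eq_mul, nsmul_eq_mul, mul_one]
    ring
  have hDF : D (T0 + T1 + T2) = 0 := by
    rw [map_add, map_add, hDT0, hDT1, hDT2, hP2, hP1, zero_add]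
    ring
  have hDI : ∀ x ∈ I, D x ∈ I := by
    intro x hx
    rw [hI, Ideal.mem_span_singleton] at hx ⊢
    obtain ⟨c, rfl⟩ := hx
    rw [Derivation.leibniz, hDF, smul_zero, add_zero, smul_eq_mul]
    exact dvd_mul_right _ _
  -- the induced linear map on the quotient
  have hker : Submodule.restrictScalars K I ≤ LinearMap.ker
      (((Ideal.Quotient.mkₐ K I).toLinearMap).comp D.toLinearMap) := by
    intro x hx
    simp only [LinearMap.mem_ker, LinearMap.comp_apply]
    exact Ideal.Quotient.eq_zero_iff_mem.2 (hDI x hx)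
  set δL := (Submodule.liftQ (Submodule.restrictScalars K I) _ hker).comp
      (Submodule.Quotient.restrictScalarsEquiv K I).symm.toLinearMap with hδL
  have hδLmk : ∀ p, δL (Ideal.Quotient.mk I p) = Ideal.Quotient.mk I (D p) := by
    intro p
    rw [hδL]
    simp only [LinearMap.comp_apply, LinearEquiv.coe_toLinearMap, ← Ideal.Quotient.mk_eq_mk,
      Submodule.Quotient.restrictScalarsEquiv_symm_mk, Submodule.liftQ_apply]
    rfl
  have hone : δL (1 : MvPolynomial (TriIdx n0 n1 n2) K ⧸ I) = 0 := by
    rw [show (1 : MvPolynomial (TriIdx n0 n1 n2) K ⧸ I) = Ideal.Quotient.mk I 1 from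
      (map_one _).symm, hδLmk, D.map_one_eq_zero, map_zero]
  have hleib : ∀ a b : MvPolynomial (TriIdx n0 n1 n2) K ⧸ I,
      δL (a * b) = a • δL b + b • δL a := by
    intro a b
    obtain ⟨p, rfl⟩ := Ideal.Quotient.mk_surjective a
    obtain ⟨q, rfl⟩ := Ideal.Quotient.mk_surjective b
    rw [← map_mul, hδLmk, hδLmk, hδLmk, Derivation.leibniz, map_add, smul_eq_mul, smul_eq_mul,
      map_mul, map_mul, smul_eq_mul, smul_eq_mul]
  set δ' : Derivation K (MvPolynomial (TriIdx n0 n1 n2) K ⧸ I)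
      (MvPolynomial (TriIdx n0 n1 n2) K ⧸ I) :=
    { toLinearMap := δL, map_one_eq_zero' := hone, leibniz' := hleib } with hδ'
  have hδmk : ∀ p, δ' (Ideal.Quotient.mk I p) = Ideal.Quotient.mk I (D p) := hδLmk
  -- evaluation point showing nonvanishing
  set pt : TriIdx n0 n1 n2 → K := fun i => if i = i11 then (-2 : K) else 1 with hpt
  have hevA1 : eval pt A1 = 1 := by
    rw [hA1, map_prod]
    refine Finset.prod_eq_one fun j hj => ?_
    have hj0 : j ≠ 0 := (Finset.mem_erase.1 hj).1
    rw [map_pow, eval_X]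
    simp [hpt, hi11, hj0]
  have hevA2 : eval pt A2 = 1 := by
    rw [hA2, map_prod]
    refine Finset.prod_eq_one fun j hj => ?_
    rw [map_pow, eval_X]
    simp [hpt, hi11]
  have hev0 : eval pt T0 = 1 := by
    rw [hT0, map_prod]
    refine Finset.prod_eq_one fun j _ => ?_
    rw [map_pow, eval_X]
    simp [hpt, hi11]
  have hev1 : eval pt T1 = -2 := by
    rw [hT1', map_mul, eval_X, hevA1, mul_one]
    simp [hpt]
  have hev2 : eval pt T2 = 1 := by
    rw [hT2', map_mul, map_pow, eval_X, hevA2, mul_one]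
    simp [hpt, hi11, hi21]
  have hevF : eval pt (T0 + T1 + T2) = 0 := by
    rw [map_add, map_add, hev0, hev1, hev2]; ring
  have hmkP1 : Ideal.Quotient.mk I (-(pderiv i11 T1)) ≠ 0 := by
    rw [Ne, Ideal.Quotient.eq_zero_iff_mem, hI, Ideal.mem_span_singleton]
    rintro ⟨c, hc⟩
    have h := congrArg (eval pt) hc
    rw [map_neg, hP1, hevA1, map_mul, hevF, zero_mul] at h
    norm_num at h
  have hδne : δ' ≠ 0 := by
    intro h0
    apply hmkP1
    rw [← hD21, ← hδmk, h0]
    simp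
  have hiter : ∀ (n : ℕ) (p : MvPolynomial (TriIdx n0 n1 n2) K),
      (⇑δ')^[n] (Ideal.Quotient.mk I p) = Ideal.Quotient.mk I ((⇑D)^[n] p) := by
    intro n
    induction n with
    | zero => intro p; rfl
    | succ n ih =>
      intro p
      rw [Function.iterate_succ_apply, Function.iterate_succ_apply, hδmk, ih]
  have hx21 : ∃ n, (⇑D)^[n] (X i21) = 0 := by
    refine ⟨2, ?_⟩
    show D (D (X i21)) = 0
    rw [hD21, hP1, map_neg, hDA1, neg_zero]
  have hXmem : ∀ i : TriIdx n0 n1 n2, ∃ n, (⇑D)^[n] (X i) = 0 := by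
    have hP2mem : ∃ n, (⇑D)^[n] (pderiv i21 T2) = 0 := by
      rw [hP2]
      refine iterD_exists_mul D ⟨1, by rw [Function.iterate_one]; exact hDA2⟩
        (iterD_exists_mul D ⟨1, by rw [Function.iterate_one]; exact D.map_natCast (l2 0)⟩
          (iterD_exists_pow D hx21 _))
    rintro (j | j | j)
    · exact ⟨1, by rw [Function.iterate_one]; exact hD0 j⟩
    · by_cases hj : j = 0
      · subst hj
        obtain ⟨m, hm⟩ := hP2mem
        refine ⟨m + 1, ?_⟩
        rw [Function.iterate_succ_apply, ← hi11, hD11, hm]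
      · exact ⟨1, by rw [Function.iterate_one]; exact hD1 j hj⟩
    · by_cases hj : j = 0
      · subst hj
        rw [← hi21]
        exact hx21
      · exact ⟨1, by rw [Function.iterate_one]; exact hD2 j hj⟩
  have hDlnd : ∀ p : MvPolynomial (TriIdx n0 n1 n2) K, ∃ n, (⇑D)^[n] p = 0 := by
    intro p
    induction p using MvPolynomial.induction_on with
    | C a =>
      refine ⟨1, ?_⟩
      rw [Function.iterate_one, show (C a : MvPolynomial (TriIdx n0 n1 n2) K) =
        algebraMap K _ a from rfl]
      exact D.map_algebraMap a
    | add p q hp hq =>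
      obtain ⟨a, ha⟩ := hp
      obtain ⟨b, hb⟩ := hq
      exact ⟨max a b, by rw [iterD_add, iterD_stable D ha (le_max_left a b),
        iterD_stable D hb (le_max_right a b), add_zero]⟩
    | mul_X p i hp => exact iterD_exists_mul D hp (hXmem i)
  refine ⟨δ', hδne, ?_, ?_, ?_, ?_, ?_, ?_⟩
  · intro x
    obtain ⟨p, rfl⟩ := Ideal.Quotient.mk_surjective x
    obtain ⟨n, hn⟩ := hDlnd p
    exact ⟨n, by rw [hiter, hn, map_zero]⟩
  · rw [hδmk, hD11]
  · rw [hδmk, hD21]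
  · intro j
    rw [hδmk, hD0 j, map_zero]
  · intro j hj
    rw [hδmk, hD1 j hj, map_zero]
  · intro j hj
    rw [hδmk, hD2 j hj, map_zero]
end

section
/- Let X be an affine variety over an algebraically closed field K of characteristic zero, let f ∈ K[X] be a nonconstant regular function, and let k_2,...,k_m be positive integers. If K[X] admits a nonzero locally nilpotent derivation ∂, then the 1-weighted suspension Y = V(y_1 y_2^{k_2}···y_m^{k_m} − f) ⊂ K^m × X is not rigid: the map δ defined by δ(y_1) = ∂(f), δ(y_j) = 0 for j ≥ 2, and δ(g) = ∂(g)·y_2^{k_2}···y_m^{k_m} for g ∈ K[X], is a nonzero locally nilpotent derivation of K[Y]. -/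
set_option synthInstance.maxHeartbeats 1000000
set_option maxHeartbeats 1000000

/-
With `A = K[X]` and `P = y_2^{k_2} ⋯ y_m^{k_m}` we have `K[Y] = A[y]/(y_1 P - f)`. On `A[y]` put
`d = ∂(f) ∂/∂y_1 + P ∂^c`, where `∂^c` applies `∂` to the coefficients. Since `d P = 0` we get
`d(y_1 P) = ∂(f) P = d(f)`, so `d` kills `y_1 P - f` and descends to `K[Y]`. It is locally
nilpotent because the elements killed by a power of a derivation form a subalgebra, which
contains the `y_j` (as `d y_j = 0` for `j ≥ 2` and `d y_1 = ∂(f)`) and every `a ∈ A`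
(as `d^n(a) = P^n ∂^n(a)`). It is nonzero: `d(a) = ∂(a) P` with `∂(a) ≠ 0`, and evaluating at
`y_1 = f`, `y_j = 1` shows this is not a multiple of `y_1 P - f`.
-/

open MvPolynomial

namespace Derivation

section

variable {R B : Type*} [CommSemiring R] [CommRing B] [Algebra R B] (d : Derivation R B B)

theorem iterate_eq_zero_of_le {a : B} {p n : ℕ} (ha : (⇑d)^[p] a = 0) (hpn : p ≤ n) :
    (⇑d)^[n] a = 0 := by
  obtain ⟨c, rfl⟩ := Nat.exists_eq_add_of_le hpn
  rw [add_comm, Function.iterate_add_apply, ha, iterate_map_zero]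

theorem iterate_add_map_mul_eq_zero {a b : B} {p q : ℕ} (ha : (⇑d)^[p] a = 0)
    (hb : (⇑d)^[q] b = 0) : (⇑d)^[p + q] (a * b) = 0 := by
  induction p generalizing a q b with
  | zero => simp_all
  | succ p ihp =>
    induction q generalizing b with
    | zero => simp_all
    | succ q ihq =>
      have hadb : (⇑d)^[p + 1 + q] (a * d b) = 0 :=
        ihq (by rwa [← Function.iterate_succ_apply])
      have hdab : (⇑d)^[p + (q + 1)] (d a * b) = 0 :=
        ihp (by rwa [← Function.iterate_succ_apply]) hb
      rw [← add_assoc, Function.iterate_succ_apply, d.leibniz, iterate_map_add, smul_eq_mul,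
        smul_eq_mul, hadb, mul_comm b, show p + 1 + q = p + (q + 1) by omega, hdab, add_zero]

def locallyNilpotentSubalgebra : Subalgebra R B where
  carrier := {a | ∃ n, (⇑d)^[n] a = 0}
  mul_mem' := fun ⟨_, ha⟩ ⟨_, hb⟩ => ⟨_, d.iterate_add_map_mul_eq_zero ha hb⟩
  add_mem' := fun {_ _} ⟨p, ha⟩ ⟨q, hb⟩ => ⟨max p q, by
    rw [iterate_map_add, d.iterate_eq_zero_of_le ha (le_max_left p q),
      d.iterate_eq_zero_of_le hb (le_max_right p q), add_zero]⟩
  algebraMap_mem' r := ⟨1, d.map_algebraMap r⟩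

theorem mem_locallyNilpotentSubalgebra_of_apply_mem {a : B}
    (ha : d a ∈ d.locallyNilpotentSubalgebra) : a ∈ d.locallyNilpotentSubalgebra :=
  let ⟨n, hn⟩ := ha
  ⟨n + 1, hn⟩

theorem isLND_iff_forall_mem_locallyNilpotentSubalgebra :
    IsLND d ↔ ∀ a, a ∈ d.locallyNilpotentSubalgebra :=
  Iff.rfl

theorem iterate_map_eq_pow_mul {A : Type*} [CommRing A] [Algebra R A] (D : Derivation R A A)
    (φ : A →+* B) {c : B} (hc : d c = 0) (hφ : ∀ a, d (φ a) = c * φ (D a)) (n : ℕ) (a : A) :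
    (⇑d)^[n] (φ a) = c ^ n * φ ((⇑D)^[n] a) := by
  induction n with
  | zero => simp
  | succ n ih =>
    rw [Function.iterate_succ_apply', ih, d.leibniz, d.leibniz_pow, hc, hφ,
      Function.iterate_succ_apply']
    simp only [smul_eq_mul]
    ring

theorem map_mem_locallyNilpotentSubalgebra {A : Type*} [CommRing A] [Algebra R A]
    {D : Derivation R A A} (hD : IsLND D) (φ : A →+* B) {c : B} (hc : d c = 0)
    (hφ : ∀ a, d (φ a) = c * φ (D a)) (a : A) : φ a ∈ d.locallyNilpotentSubalgebra :=
  let ⟨n, hn⟩ := hD a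
  ⟨n, by rw [d.iterate_map_eq_pow_mul D φ hc hφ, hn, map_zero, mul_zero]⟩

theorem map_mem_span_singleton {F : B} (hF : d F = 0) :
    ∀ x ∈ Ideal.span {F}, d x ∈ Ideal.span {F} := by
  intro x hx
  obtain ⟨y, rfl⟩ := Ideal.mem_span_singleton'.mp hx
  rw [d.leibniz, hF, smul_zero, zero_add, smul_eq_mul]
  exact Ideal.mul_mem_right _ _ (Ideal.mem_span_singleton_self F)

variable {I : Ideal B} (hI : ∀ x ∈ I, d x ∈ I)

noncomputable def quotient : Derivation R (B ⧸ I) (B ⧸ I) :=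
  liftOfSurjective (Ideal.Quotient.mkₐ_surjective R I) fun x hx => by
    rw [Ideal.Quotient.mkₐ_eq_mk, Ideal.Quotient.eq_zero_iff_mem] at hx ⊢
    exact hI x hx

theorem quotient_mk (x : B) :
    d.quotient hI (Ideal.Quotient.mk I x) = Ideal.Quotient.mk I (d x) := by
  rw [← Ideal.Quotient.mkₐ_eq_mk R, quotient]
  exact liftOfSurjective_apply ..

theorem iterate_quotient_mk (n : ℕ) (x : B) :
    (⇑(d.quotient hI))^[n] (Ideal.Quotient.mk I x) = Ideal.Quotient.mk I ((⇑d)^[n] x) := by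
  induction n generalizing x with
  | zero => rfl
  | succ n ih => rw [Function.iterate_succ_apply, quotient_mk, ih, Function.iterate_succ_apply]

theorem _root_.IsLND.quotient {d : Derivation R B B} (hd : IsLND d) (hI : ∀ x ∈ I, d x ∈ I) :
    IsLND (d.quotient hI) := by
  intro y
  obtain ⟨x, rfl⟩ := Ideal.Quotient.mk_surjective y
  obtain ⟨n, hn⟩ := hd x
  exact ⟨n, by rw [iterate_quotient_mk, hn, map_zero]⟩

end

noncomputable section

variable {R A σ : Type*} [CommSemiring R] [CommRing A] [Algebra R A] (D : Derivation R A A)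

def mvMapCoeffsₗ : MvPolynomial σ A →ₗ[R] MvPolynomial σ A :=
  (AddMonoidAlgebra.coeffLinearEquiv R).symm.toLinearMap ∘ₗ
    Finsupp.mapRange.linearMap D.toLinearMap ∘ₗ (AddMonoidAlgebra.coeffLinearEquiv R).toLinearMap

theorem mvMapCoeffsₗ_monomial (s : σ →₀ ℕ) (a : A) :
    D.mvMapCoeffsₗ (monomial s a) = monomial s (D a) := by
  change AddMonoidAlgebra.ofCoeff (Finsupp.mapRange D D.map_zero (Finsupp.single s a)) = _
  rw [Finsupp.mapRange_single]
  rfl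

def mvMapCoeffs : Derivation R (MvPolynomial σ A) (MvPolynomial σ A) where
  toLinearMap := D.mvMapCoeffsₗ
  map_one_eq_zero' := by
    change D.mvMapCoeffsₗ (monomial 0 1) = 0
    rw [mvMapCoeffsₗ_monomial, D.map_one_eq_zero, monomial_zero]
  leibniz' p q := by
    change D.mvMapCoeffsₗ (p * q) = p * D.mvMapCoeffsₗ q + q * D.mvMapCoeffsₗ p
    induction p using MvPolynomial.induction_on' with
    | add p₁ p₂ h₁ h₂ => simp only [add_mul, map_add, h₁, h₂]; ring
    | monomial s a =>
      induction q using MvPolynomial.induction_on' with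
      | add q₁ q₂ h₁ h₂ => simp only [mul_add, map_add, h₁, h₂]; ring
      | monomial t b =>
        rw [monomial_mul, mvMapCoeffsₗ_monomial, mvMapCoeffsₗ_monomial, mvMapCoeffsₗ_monomial,
          D.leibniz, map_add, monomial_mul, monomial_mul, add_comm t s, smul_eq_mul, smul_eq_mul]

theorem mvMapCoeffs_C (a : A) : D.mvMapCoeffs (C a : MvPolynomial σ A) = C (D a) :=
  D.mvMapCoeffsₗ_monomial 0 a

theorem mvMapCoeffs_X (i : σ) : D.mvMapCoeffs (X i : MvPolynomial σ A) = 0 := by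
  change D.mvMapCoeffsₗ (monomial _ 1) = 0
  rw [mvMapCoeffsₗ_monomial, D.map_one_eq_zero, monomial_zero]

end

end Derivation

namespace MvPolynomial

noncomputable section

variable {R A σ : Type*} [CommSemiring R] [CommRing A] [Algebra R A] [Fintype σ] [DecidableEq σ]

def suspensionCofactor (i : σ) (k : σ → ℕ) : MvPolynomial σ A :=
  ∏ j ∈ Finset.univ.erase i, X j ^ k j

theorem prod_X_pow_eq_X_mul_suspensionCofactor {i : σ} {k : σ → ℕ} (hk : k i = 1) :
    ∏ j, X j ^ k j = (X i * suspensionCofactor i k : MvPolynomial σ A) := by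
  rw [suspensionCofactor, ← Finset.mul_prod_erase _ _ (Finset.mem_univ i), hk, pow_one]

theorem eq_zero_of_C_mul_suspensionCofactor_mem_span {f a : A} {i : σ} {k : σ → ℕ}
    (h : C a * suspensionCofactor i k ∈ Ideal.span {X i * suspensionCofactor i k - C f}) :
    a = 0 := by
  obtain ⟨q, hq⟩ := Ideal.mem_span_singleton.mp h
  let ψ : MvPolynomial σ A →ₐ[A] A := aeval (Function.update 1 i f)
  have hψ : ψ (suspensionCofactor i k) = 1 := by
    simp only [ψ, suspensionCofactor, map_prod, map_pow, aeval_X]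
    exact Finset.prod_eq_one fun j hj => by
      rw [Function.update_of_ne (Finset.ne_of_mem_erase hj), Pi.one_apply, one_pow]
  have hψq := congrArg ψ hq
  rw [map_mul, map_mul, map_sub, map_mul, hψ] at hψq
  simpa [ψ] using hψq

def suspensionDerivation (D : Derivation R A A) (f : A) (i : σ) (k : σ → ℕ) :
    Derivation R (MvPolynomial σ A) (MvPolynomial σ A) :=
  (C (D f) : MvPolynomial σ A) •
      (pderiv i : Derivation A (MvPolynomial σ A) _).restrictScalars R +
    (suspensionCofactor i k : MvPolynomial σ A) • D.mvMapCoeffs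

variable (D : Derivation R A A) (f : A) (i : σ) (k : σ → ℕ)

theorem suspensionDerivation_apply (p : MvPolynomial σ A) :
    suspensionDerivation D f i k p =
      C (D f) * pderiv i p + suspensionCofactor i k * D.mvMapCoeffs p :=
  rfl

theorem suspensionDerivation_C (a : A) :
    suspensionDerivation D f i k (C a) = C (D a) * suspensionCofactor i k := by
  rw [suspensionDerivation_apply, pderiv_C, mul_zero, zero_add, Derivation.mvMapCoeffs_C,
    mul_comm]

theorem suspensionDerivation_X_self : suspensionDerivation D f i k (X i) = C (D f) := by
  rw [suspensionDerivation_apply, pderiv_X_self, Derivation.mvMapCoeffs_X, mul_zero, add_zero,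
    mul_one]

theorem suspensionDerivation_X_of_ne {j : σ} (hj : j ≠ i) :
    suspensionDerivation D f i k (X j) = 0 := by
  rw [suspensionDerivation_apply, pderiv_X_of_ne hj, Derivation.mvMapCoeffs_X, mul_zero,
    mul_zero, add_zero]

theorem suspensionDerivation_suspensionCofactor :
    suspensionDerivation D f i k (suspensionCofactor i k) = 0 :=
  Finset.prod_induction _ (fun p => suspensionDerivation D f i k p = 0)
    (fun p q hp hq => by rw [Derivation.leibniz, hp, hq, smul_zero, smul_zero, add_zero])
    (Derivation.map_one_eq_zero _)
    (fun j hj => by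
      rw [Derivation.leibniz_pow,
        suspensionDerivation_X_of_ne D f i k (Finset.ne_of_mem_erase hj), smul_zero, smul_zero])

theorem suspensionDerivation_X_mul_suspensionCofactor_sub_C :
    suspensionDerivation D f i k (X i * suspensionCofactor i k - C f) = 0 := by
  rw [map_sub, Derivation.leibniz, suspensionDerivation_suspensionCofactor,
    suspensionDerivation_X_self, suspensionDerivation_C, smul_zero, zero_add, smul_eq_mul,
    mul_comm, sub_self]

theorem isLND_suspensionDerivation {D : Derivation R A A} (hD : IsLND D) :
    IsLND (suspensionDerivation D f i k) := by
  set d := suspensionDerivation D f i k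
  have hC : ∀ a, C a ∈ d.locallyNilpotentSubalgebra :=
    d.map_mem_locallyNilpotentSubalgebra hD C (suspensionDerivation_suspensionCofactor D f i k)
      fun a => by rw [suspensionDerivation_C, mul_comm]
  have hX : ∀ j, X j ∈ d.locallyNilpotentSubalgebra := by
    intro j
    apply d.mem_locallyNilpotentSubalgebra_of_apply_mem
    by_cases hj : j = i
    · rw [hj, suspensionDerivation_X_self]
      exact hC (D f)
    · rw [suspensionDerivation_X_of_ne D f i k hj]
      exact zero_mem _
  refine d.isLND_iff_forall_mem_locallyNilpotentSubalgebra.mpr fun p => ?_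
  induction p using MvPolynomial.induction_on with
  | C a => exact hC a
  | add p q hp hq => exact add_mem hp hq
  | mul_X p j hp => exact mul_mem hp (hX j)

end

end MvPolynomial

theorem stmt10_general {K A : Type*} [Field K]
    [CommRing A] [Algebra K A]
    (D : Derivation K A A) (hD : IsLND D) (hDne : D ≠ 0)
    (f : A)
    (m : ℕ) (k : Fin (m + 1) → ℕ) (hk1 : k 0 = 1)
    (I : Ideal (MvPolynomial (Fin (m + 1)) A))
    (hI : I = Ideal.span {(∏ j, X j ^ k j) - C f}) :
    ∃ δ : Derivation K (MvPolynomial (Fin (m + 1)) A ⧸ I)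
        (MvPolynomial (Fin (m + 1)) A ⧸ I),
      δ ≠ 0 ∧ IsLND δ ∧
      δ (Ideal.Quotient.mk I (X 0)) = Ideal.Quotient.mk I (C (D f)) ∧
      (∀ j : Fin (m + 1), j ≠ 0 → δ (Ideal.Quotient.mk I (X j)) = 0) ∧
      (∀ g : A, δ (Ideal.Quotient.mk I (C g)) =
        Ideal.Quotient.mk I (C (D g) * ∏ j ∈ Finset.univ.erase (0 : Fin (m + 1)), X j ^ k j)) := by
  rw [prod_X_pow_eq_X_mul_suspensionCofactor hk1] at hI
  subst hI
  set d := suspensionDerivation D f 0 k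
  have hI :=
    d.map_mem_span_singleton (suspensionDerivation_X_mul_suspensionCofactor_sub_C D f 0 k)
  obtain ⟨a, ha⟩ := DFunLike.ne_iff.mp hDne
  refine ⟨d.quotient hI, fun h => ha ?_, (isLND_suspensionDerivation f 0 k hD).quotient hI, ?_,
    fun j hj => ?_, fun g => ?_⟩
  · apply eq_zero_of_C_mul_suspensionCofactor_mem_span (f := f) (i := 0) (k := k)
    rw [← Ideal.Quotient.eq_zero_iff_mem, ← suspensionDerivation_C, ← d.quotient_mk hI, h,
      Derivation.zero_apply]
  · rw [d.quotient_mk, suspensionDerivation_X_self]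
  · rw [d.quotient_mk, suspensionDerivation_X_of_ne D f 0 k hj, map_zero]
  · rw [d.quotient_mk, suspensionDerivation_C, suspensionCofactor]

theorem stmt10 {K A : Type*} [Field K] [IsAlgClosed K] [CharZero K]
    [CommRing A] [Algebra K A]
    (D : Derivation K A A) (hD : IsLND D) (hDne : D ≠ 0)
    (f : A) (hf : f ∉ Set.range (algebraMap K A))
    (m : ℕ) (k : Fin (m + 1) → ℕ) (hk1 : k 0 = 1) (hk : ∀ j, 0 < k j)
    (I : Ideal (MvPolynomial (Fin (m + 1)) A))
    (hI : I = Ideal.span {(∏ j, X j ^ k j) - C f})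
    (hirr : IsDomain (MvPolynomial (Fin (m + 1)) A ⧸ I)) :
    ∃ δ : Derivation K (MvPolynomial (Fin (m + 1)) A ⧸ I)
        (MvPolynomial (Fin (m + 1)) A ⧸ I),
      δ ≠ 0 ∧ IsLND δ ∧
      δ (Ideal.Quotient.mk I (X 0)) = Ideal.Quotient.mk I (C (D f)) ∧
      (∀ j : Fin (m + 1), j ≠ 0 → δ (Ideal.Quotient.mk I (X j)) = 0) ∧
      (∀ g : A, δ (Ideal.Quotient.mk I (C g)) =
        Ideal.Quotient.mk I (C (D g) * ∏ j ∈ Finset.univ.erase (0 : Fin (m + 1)), X j ^ k j)) :=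
  stmt10_general D hD hDne f m k hk1 I hI
end

section
/- Let X be an affine variety over an algebraically closed field K of characteristic zero, f ∈ K[X] nonconstant, and Y = Susp(X, f, k_1,...,k_m) an irreducible m-suspension. Let T ≅ (K*)^{m−1} be the subtorus of (K*)^m stabilizing the monomial y_1^{k_1}···y_m^{k_m}, acting on Y. Then for any T-homogeneous locally nilpotent derivation ∂ of K[Y], there exists an index i ∈ {1,...,m} such that ∂(y_j) = 0 for all j ≠ i. -/
set_option synthInstance.maxHeartbeats 1000000
set_option maxHeartbeats 1000000

open MvPolynomial

section Deriv
variable {K B : Type*} [CommRing K] [CommRing B] [Algebra K B] (D : Derivation K B B)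

lemma iter_leibniz (a b : B) (n : ℕ) :
    (⇑D)^[n] (a * b) =
      ∑ r ∈ Finset.range (n + 1), (n.choose r) • ((⇑D)^[r] a * (⇑D)^[n - r] b) := by
  induction n with
  | zero => simp
  | succ n ih =>
    rw [Function.iterate_succ_apply', ih, map_sum]
    have hterm : ∀ r, D ((n.choose r) • ((⇑D)^[r] a * (⇑D)^[n - r] b)) =
        (n.choose r) • ((⇑D)^[r+1] a * (⇑D)^[n - r] b)
        + (n.choose r) • ((⇑D)^[r] a * (⇑D)^[n - r + 1] b) := by
      intro r
      rw [map_nsmul, D.leibniz, Function.iterate_succ_apply', Function.iterate_succ_apply',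
        smul_add, smul_eq_mul, smul_eq_mul]
      ring
    simp only [hterm, Finset.sum_add_distrib]
    have S2 : ∑ r ∈ Finset.range (n + 1), (n.choose r) • ((⇑D)^[r] a * (⇑D)^[n - r + 1] b)
        = ∑ r ∈ Finset.range n, (n.choose (r+1)) • ((⇑D)^[r+1] a * (⇑D)^[n - r] b)
          + (⇑D)^[0] a * (⇑D)^[n + 1] b := by
      rw [Finset.sum_range_succ']
      congr 1
      · apply Finset.sum_congr rfl
        intro r hr
        have : n - (r+1) + 1 = n - r := by
          have := Finset.mem_range.mp hr; omega
        rw [this]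
      · simp
    rw [S2]
    have S2' : ∑ r ∈ Finset.range n, (n.choose (r+1)) • ((⇑D)^[r+1] a * (⇑D)^[n - r] b)
        = ∑ r ∈ Finset.range (n+1), (n.choose (r+1)) • ((⇑D)^[r+1] a * (⇑D)^[n - r] b) := by
      rw [Finset.sum_range_succ]
      simp
    rw [S2']
    rw [Finset.sum_range_succ' (fun r => ((n+1).choose r) • ((⇑D)^[r] a * (⇑D)^[n + 1 - r] b)) (n+1)]
    have : ∀ r ∈ Finset.range (n+1),
        ((n+1).choose (r+1)) • ((⇑D)^[r+1] a * (⇑D)^[n + 1 - (r+1)] b)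
        = (n.choose r) • ((⇑D)^[r+1] a * (⇑D)^[n - r] b)
          + (n.choose (r+1)) • ((⇑D)^[r+1] a * (⇑D)^[n - r] b) := by
      intro r hr
      have h1 : n + 1 - (r + 1) = n - r := by omega
      rw [h1, Nat.choose_succ_succ, add_smul]
    rw [Finset.sum_congr rfl this, Finset.sum_add_distrib]
    simp [add_comm, add_assoc, add_left_comm]

/-- exact D-degree -/
def PP (x : B) (n : ℕ) : Prop := (⇑D)^[n] x ≠ 0 ∧ (⇑D)^[n + 1] x = 0

lemma iter_zero_of_le {x : B} {s r : ℕ} (h : (⇑D)^[s] x = 0) (hsr : s ≤ r) :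
    (⇑D)^[r] x = 0 := by
  obtain ⟨t, rfl⟩ := Nat.exists_eq_add_of_le hsr
  rw [add_comm, Function.iterate_add_apply, h]
  exact Function.iterate_fixed (map_zero D) t

lemma PP_unique {x : B} {p q : ℕ} (hp : PP D x p) (hq : PP D x q) : p = q := by
  by_contra hne
  rcases Nat.lt_or_ge p q with h | h
  · exact hq.1 (iter_zero_of_le D hp.2 h)
  · rcases Nat.lt_or_ge q p with h' | h'
    · exact hp.1 (iter_zero_of_le D hq.2 h')
    · omega

lemma PP_exists {x : B} (hx : x ≠ 0) (h : ∃ n, (⇑D)^[n] x = 0) : ∃ n, PP D x n := by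
  classical
  obtain ⟨n, hn⟩ := h
  induction n with
  | zero => exact absurd hn hx
  | succ n ih =>
    by_cases h' : (⇑D)^[n] x = 0
    · exact ih h'
    · exact ⟨n, h', hn⟩

variable [IsDomain B] [CharZero B]

lemma PP_mul {a b : B} {p q : ℕ} (ha : PP D a p) (hb : PP D b q) : PP D (a * b) (p + q) := by
  constructor
  · rw [iter_leibniz]
    rw [Finset.sum_eq_single p]
    · simp only [Nat.add_sub_cancel_left]
      intro h
      rcases smul_eq_zero.mp h with h | h
      · exact (Nat.choose_pos (Nat.le_add_right p q)).ne' (by exact_mod_cast h)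
      · rcases mul_eq_zero.mp h with h | h
        · exact ha.1 h
        · exact hb.1 h
    · intro r hr hne
      rcases Nat.lt_or_ge r p with h | h
      · have : q + 1 ≤ p + q - r := by omega
        rw [iter_zero_of_le D hb.2 this, mul_zero, smul_zero]
      · have : p + 1 ≤ r := by omega
        rw [iter_zero_of_le D ha.2 this, zero_mul, smul_zero]
    · intro h
      exact absurd (Finset.mem_range.mpr (by omega)) h
  · rw [iter_leibniz]
    apply Finset.sum_eq_zero
    intro r hr
    rcases Nat.lt_or_ge r (p + 1) with h | h
    · have : q + 1 ≤ p + q + 1 - r := by omega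
      rw [iter_zero_of_le D hb.2 this, mul_zero, smul_zero]
    · rw [iter_zero_of_le D ha.2 h, zero_mul, smul_zero]

lemma PP_one : PP D 1 0 := by
  constructor
  · simp
  · simpa using D.map_one_eq_zero

lemma PP_pow {x : B} {p : ℕ} (hx : PP D x p) (c : ℕ) : PP D (x ^ c) (c * p) := by
  induction c with
  | zero => simpa using PP_one D
  | succ c ih =>
    have := PP_mul D ih hx
    rw [← pow_succ] at this
    have he : (c + 1) * p = c * p + p := by ring
    rw [he]
    exact this

lemma PP_prod {ι : Type*} (s : Finset ι) (x : ι → B) (c : ι → ℕ) (n : ι → ℕ)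
    (h : ∀ i ∈ s, c i = 0 ∨ PP D (x i) (n i)) :
    PP D (∏ i ∈ s, x i ^ c i) (∑ i ∈ s, c i * n i) := by
  classical
  induction s using Finset.induction with
  | empty => simpa using PP_one D
  | @insert a s hnotmem ih =>
    rw [Finset.prod_insert hnotmem, Finset.sum_insert hnotmem]
    refine PP_mul D ?_ (ih fun i hi => h i (Finset.mem_insert_of_mem hi))
    rcases h a (Finset.mem_insert_self a s) with h0 | hP
    · rw [h0]; simpa using PP_one D
    · exact PP_pow D hP _

end Deriv

/-- For a `T`-homogeneous LND on an irreducible suspension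
`Y = V(y_1^{k_1} ⋯ y_m^{k_m} - f) ⊂ K^m × X`, where the character lattice `M` of the
stabilizer torus is the quotient of `ℤ^m` by the relation `∑ k_i e_i = 0` and the grading of
`K[Y]` assigns to a monomial `g · y^a` the class of `a` in `M`, there is an index `i` with
`∂(y_j) = 0` for all `j ≠ i`. -/
theorem stmt11 {K A : Type*} [Field K] [IsAlgClosed K] [CharZero K]
    [CommRing A] [Algebra K A]
    (f : A) (hf : f ∉ Set.range (algebraMap K A))
    (m : ℕ) (k : Fin (m + 1) → ℕ) (hk : ∀ j, 0 < k j)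
    (I : Ideal (MvPolynomial (Fin (m + 1)) A))
    (hI : I = Ideal.span {(∏ j, X j ^ k j) - C f})
    (hirr : IsDomain (MvPolynomial (Fin (m + 1)) A ⧸ I))
    -- `M` is the character group of the stabilizer torus `T`
    (M : Type*) [AddCommGroup M]
    (π : ((Fin (m + 1) → ℤ)) →+ M) (hπ : Function.Surjective π)
    (hker : π.ker = AddSubgroup.zmultiples (fun j => (k j : ℤ)))
    -- the induced `M`-grading of `K[Y]`
    (𝒜 : M → Submodule K (MvPolynomial (Fin (m + 1)) A ⧸ I))
    (h𝒜 : ∀ α : M, 𝒜 α = Submodule.span K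
      {b | ∃ (g : A) (a : Fin (m + 1) → ℕ), π (fun j => (a j : ℤ)) = α ∧
        b = Ideal.Quotient.mk I (C g * ∏ j, X j ^ a j)})
    -- a `T`-homogeneous locally nilpotent derivation
    (D : Derivation K (MvPolynomial (Fin (m + 1)) A ⧸ I)
        (MvPolynomial (Fin (m + 1)) A ⧸ I))
    (hD : IsLND D)
    (α0 : M) (hhom : ∀ (α : M) (b), b ∈ 𝒜 α → D b ∈ 𝒜 (α + α0)) :
    ∃ i : Fin (m + 1), ∀ j, j ≠ i → D (Ideal.Quotient.mk I (X j)) = 0 := by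
  classical
  haveI := hirr
  haveI : CharZero (MvPolynomial (Fin (m + 1)) A ⧸ I) :=
    charZero_of_injective_algebraMap
      (RingHom.injective (algebraMap K (MvPolynomial (Fin (m + 1)) A ⧸ I)))
  set B := MvPolynomial (Fin (m + 1)) A ⧸ I with hB
  let mk : MvPolynomial (Fin (m + 1)) A →+* B := Ideal.Quotient.mk I
  let u : Fin (m + 1) → B := fun l => mk (X l)
  let kv : Fin (m + 1) → ℤ := fun j => (k j : ℤ)
  have hkv : π kv = 0 := by
    have : kv ∈ π.ker := by
      rw [hker]
      exact AddSubgroup.mem_zmultiples kv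
    exact this
  -- the defining relation
  have hrel : ∏ l, u l ^ k l = mk (C f) := by
    have hmem : (∏ j, X j ^ k j) - C f ∈ I := by
      rw [hI]; exact Ideal.subset_span rfl
    have h0 : mk ((∏ j, X j ^ k j) - C f) = 0 := Ideal.Quotient.eq_zero_iff_mem.mpr hmem
    rw [map_sub, sub_eq_zero] at h0
    rw [← h0, map_prod]
    simp [u, mk]
  -- decomposition of homogeneous elements
  have decomp : ∀ (α : M) (x : B), x ∈ 𝒜 α →
      ∃ (G : A) (c : Fin (m + 1) → ℕ), π (fun j => (c j : ℤ)) = α ∧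
        x = mk (C G) * ∏ l, u l ^ c l := by
    intro α x hx
    rw [h𝒜] at hx
    induction hx using Submodule.span_induction with
    | mem b hb =>
      obtain ⟨g, a, hπa, rfl⟩ := hb
      refine ⟨g, a, hπa, ?_⟩
      rw [map_mul, map_prod]
      simp [u, mk]
    | zero =>
      obtain ⟨v, hv⟩ := hπ α
      set t : ℕ := Finset.univ.sup fun l => (v l).natAbs with ht
      refine ⟨0, fun l => (v l + t * kv l).toNat, ?_, by simp⟩
      have hnn : ∀ l, (0:ℤ) ≤ v l + t * kv l := by
        intro l
        have h1 : (v l).natAbs ≤ t :=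
          Finset.le_sup (f := fun l => (v l).natAbs) (Finset.mem_univ l)
        have h1' : ((v l).natAbs : ℤ) ≤ (t : ℤ) := by exact_mod_cast h1
        have h2 : (1:ℤ) ≤ kv l := by
          have := hk l
          simp only [kv]
          omega
        have h3 : (t : ℤ) ≤ (t : ℤ) * kv l := le_mul_of_one_le_right (by positivity) h2
        omega
      have hcast : (fun j => (((v j + t * kv j).toNat : ℤ))) = v + (t : ℤ) • kv := by
        funext j
        rw [Int.toNat_of_nonneg (hnn j)]
        simp [mul_comm]
      rw [hcast, map_add, hv, map_zsmul, hkv, smul_zero, add_zero]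
    | add x y hx hy ihx ihy =>
      obtain ⟨G, c, hc, rfl⟩ := ihx
      obtain ⟨G', c', hc', rfl⟩ := ihy
      have hdiff : ((fun j => (c j : ℤ)) - fun j => (c' j : ℤ)) ∈ π.ker := by
        rw [AddMonoidHom.mem_ker, map_sub, hc, hc', sub_self]
      rw [hker, AddSubgroup.mem_zmultiples_iff] at hdiff
      obtain ⟨t, ht⟩ := hdiff
      have htj : ∀ j, t * kv j = (c j : ℤ) - (c' j : ℤ) := fun j => congrFun ht j
      -- key rewriting: shift by f-powers
      have shift : ∀ (d d' : Fin (m+1) → ℕ) (s : ℕ), (∀ j, d j = d' j + s * k j) →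
          ∏ l, u l ^ d l = (∏ l, u l ^ d' l) * mk (C f) ^ s := by
        intro d d' s hdd
        calc ∏ l, u l ^ d l = ∏ l, (u l ^ d' l * (u l ^ k l) ^ s) := by
              apply Finset.prod_congr rfl
              intro l _
              rw [hdd l, pow_add, mul_comm s (k l), pow_mul]
          _ = (∏ l, u l ^ d' l) * (∏ l, u l ^ k l) ^ s := by
              rw [Finset.prod_mul_distrib, Finset.prod_pow]
          _ = (∏ l, u l ^ d' l) * mk (C f) ^ s := by rw [hrel]
      rcases le_or_gt 0 t with hpos | hneg
      · set s : ℕ := t.toNat with hs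
        have hcc : ∀ j, c j = c' j + s * k j := by
          intro j
          have h1 := htj j
          have h2 : (s : ℤ) = t := Int.toNat_of_nonneg hpos
          have : (c j : ℤ) = (c' j : ℤ) + (s : ℤ) * (k j : ℤ) := by
            rw [h2]; simp only [kv] at h1; omega
          exact_mod_cast this
        refine ⟨G * f ^ s + G', c', hc', ?_⟩
        rw [shift c c' s hcc]
        simp only [map_add, map_mul, map_pow]
        ring
      · set s : ℕ := (-t).toNat with hs
        have hcc : ∀ j, c' j = c j + s * k j := by
          intro j
          have h1 := htj j
          have h2 : (s : ℤ) = -t := Int.toNat_of_nonneg (by omega)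
          have : (c' j : ℤ) = (c j : ℤ) + (s : ℤ) * (k j : ℤ) := by
            rw [h2]; simp only [kv] at h1; nlinarith [h1]
          exact_mod_cast this
        refine ⟨G + G' * f ^ s, c, hc, ?_⟩
        rw [shift c' c s hcc]
        simp only [map_add, map_mul, map_pow]
        ring
    | smul a x hx ihx =>
      obtain ⟨G, c, hc, rfl⟩ := ihx
      refine ⟨a • G, c, hc, ?_⟩
      have h1 : C (a • G) = (algebraMap K (MvPolynomial (Fin (m+1)) A)) a
          * C G := by
        rw [Algebra.smul_def, map_mul]
        rw [IsScalarTower.algebraMap_apply K A (MvPolynomial (Fin (m+1)) A),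
          MvPolynomial.algebraMap_eq]
      have h2 : mk (C (a • G)) = a • mk (C G) := by
        rw [h1, map_mul, Ideal.Quotient.mk_algebraMap, ← Algebra.smul_def]
      rw [h2, smul_mul_assoc]
  -- exact degree function
  have hn : ∀ l : Fin (m + 1), ∃ nl, u l ≠ 0 → PP D (u l) nl := by
    intro l
    by_cases h : u l = 0
    · exact ⟨0, fun h' => absurd h h'⟩
    · obtain ⟨nl, hnl⟩ := PP_exists D h (hD (u l))
      exact ⟨nl, fun _ => hnl⟩
  choose n hnP using hn
  -- the key per-index lemma
  have key : ∀ i : Fin (m + 1), D (u i) ≠ 0 →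
      ∃ c : Fin (m + 1) → ℕ,
        π (fun l => ((if l = i then 1 else 0 : ℕ) : ℤ)) + α0 = π (fun l => (c l : ℤ)) ∧
        c i = 0 := by
    intro i hDi
    have hmon : (∏ j, X j ^ (if j = i then 1 else 0 : ℕ) :
        MvPolynomial (Fin (m + 1)) A) = X i := by
      rw [Finset.prod_eq_single i]
      · simp
      · intro j _ hji
        rw [if_neg hji, pow_zero]
      · intro h
        exact absurd (Finset.mem_univ i) h
    have hmem : u i ∈ 𝒜 (π (fun l => ((if l = i then 1 else 0 : ℕ) : ℤ))) := by
      rw [h𝒜]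
      apply Submodule.subset_span
      refine ⟨1, fun l => if l = i then 1 else 0, rfl, ?_⟩
      rw [map_one, one_mul, hmon]
    have hDmem := hhom _ _ hmem
    obtain ⟨G, c, hc, hx⟩ := decomp _ _ hDmem
    refine ⟨c, by rw [hc], ?_⟩
    have hGne : mk (C G) ≠ 0 := by
      intro h
      exact hDi (by rw [hx, h, zero_mul])
    have hWne : (∏ l, u l ^ c l) ≠ 0 := by
      intro h
      exact hDi (by rw [hx, h, mul_zero])
    obtain ⟨g, hg⟩ := PP_exists D hGne (hD _)
    have hWP : PP D (∏ l, u l ^ c l) (∑ l, c l * n l) := by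
      apply PP_prod D Finset.univ u c n
      intro l _
      by_cases h0 : c l = 0
      · exact Or.inl h0
      · refine Or.inr (hnP l ?_)
        intro h
        exact hWne (Finset.prod_eq_zero (Finset.mem_univ l)
          (by rw [h, zero_pow h0]))
    have hDP : PP D (D (u i)) (g + ∑ l, c l * n l) := by
      rw [hx]
      exact PP_mul D hg hWP
    have hui : u i ≠ 0 := fun h => hDi (by rw [h, map_zero])
    have huiP : PP D (u i) (n i) := hnP i hui
    have huiP2 : PP D (u i) (g + ∑ l, c l * n l + 1) := by
      constructor
      · rw [Function.iterate_succ_apply]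
        exact hDP.1
      · rw [Function.iterate_succ_apply]
        exact hDP.2
    have heq : n i = g + ∑ l, c l * n l + 1 := PP_unique D huiP huiP2
    by_contra hci
    have h1 : n i ≤ c i * n i := Nat.le_mul_of_pos_left (n i) (Nat.pos_of_ne_zero hci)
    have h2 : c i * n i ≤ ∑ l, c l * n l :=
      Finset.single_le_sum (f := fun l => c l * n l) (fun _ _ => Nat.zero_le _)
        (Finset.mem_univ i)
    omega
  -- final assembly
  by_contra hcon
  push_neg at hcon
  obtain ⟨i1, -, hD1⟩ := hcon 0
  obtain ⟨i2, hne, hD2⟩ := hcon i1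
  obtain ⟨c, hc, hci⟩ := key i2 hD2
  obtain ⟨c', hc', hc'j⟩ := key i1 hD1
  set δ2 : Fin (m + 1) → ℤ := fun l => ((if l = i2 then 1 else 0 : ℕ) : ℤ) with hδ2
  set δ1 : Fin (m + 1) → ℤ := fun l => ((if l = i1 then 1 else 0 : ℕ) : ℤ) with hδ1
  set cz : Fin (m + 1) → ℤ := fun l => (c l : ℤ) with hcz
  set cz' : Fin (m + 1) → ℤ := fun l => (c' l : ℤ) with hcz'
  have hw : (cz - cz' - δ2 + δ1) ∈ π.ker := by
    rw [AddMonoidHom.mem_ker, map_add, map_sub, map_sub]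
    rw [← hc, ← hc']
    abel
  rw [hker, AddSubgroup.mem_zmultiples_iff] at hw
  obtain ⟨t, ht⟩ := hw
  have e1 : t * kv i1 = (c i1 : ℤ) + 1 := by
    have := congrFun ht i1
    simp only [Pi.smul_apply, smul_eq_mul, Pi.add_apply, Pi.sub_apply, hδ1, hδ2, hcz, hcz',
      if_pos rfl, if_neg (Ne.symm hne), hc'j] at this
    simpa [kv] using this
  have e2 : t * kv i2 = -(c' i2 : ℤ) - 1 := by
    have := congrFun ht i2
    simp only [Pi.smul_apply, smul_eq_mul, Pi.add_apply, Pi.sub_apply, hδ1, hδ2, hcz, hcz',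
      if_pos rfl, if_neg hne, hci] at this
    simpa [kv] using this
  have hk1 : (0:ℤ) < kv i1 := by
    have := hk i1; simp only [kv]; exact_mod_cast this
  have hk2 : (0:ℤ) < kv i2 := by
    have := hk i2; simp only [kv]; exact_mod_cast this
  have hc1 : (0:ℤ) ≤ (c i1 : ℤ) := Int.natCast_nonneg _
  have hc2 : (0:ℤ) ≤ (c' i2 : ℤ) := Int.natCast_nonneg _
  rcases lt_trichotomy t 0 with h | h | h
  · have : t * kv i1 < 0 := mul_neg_of_neg_of_pos h hk1
    omega
  · rw [h, zero_mul] at e1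
    omega
  · have : 0 < t * kv i2 := mul_pos h hk2
    omega
end

section
/- Let K be an algebraically closed field of characteristic zero and consider X = V(T_0^{l_0} + T_1^{l_1} + T_{21} T_{22}···T_{2n_2}) with n_2 ≥ 1 (all exponents in the third monomial equal to 1). Fix nonzero constants c_2,...,c_{n_2} ∈ K*. Then the group SAut(X) generated by all G_a-subgroups of Aut(X) acts transitively on the subvariety X(c_2,...,c_{n_2}) = V(T_{22}−c_2,...,T_{2n_2}−c_{n_2}) ∩ X. -/
set_option synthInstance.maxHeartbeats 1000000
set_option maxHeartbeats 1000000

/-- The exponential of a locally nilpotent derivation: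
`exp(δ)(a) = ∑ δ^[n](a) / n!` (a finite sum for each `a`). -/
noncomputable def LNDexp {K A : Type*} [Field K] [CharZero K] [CommRing A] [Algebra K A]
    (δ : Derivation K A A) (a : A) : A :=
  ∑ᶠ n : ℕ, ((n.factorial : K)⁻¹) • (⇑δ)^[n] a

/-- The subgroup of special automorphisms: the subgroup of `Aut(X)` generated by all
one-parameter unipotent subgroups `exp(δ)` for locally nilpotent derivations `δ`. -/
noncomputable def SAut (K A : Type*) [Field K] [CharZero K] [CommRing A] [Algebra K A] :
    Subgroup (A ≃ₐ[K] A) :=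
  Subgroup.closure {φ : A ≃ₐ[K] A |
    ∃ δ : Derivation K A A, IsLND δ ∧ ∀ a, φ a = LNDexp δ a}

open MvPolynomial

/-- Index set of the variables `T_{0j}, T_{1j}, T_{2j}`. -/
abbrev TriIdx18 (n0 n1 n2 : ℕ) : Type :=
  Fin n0 ⊕ (Fin (n1 + 1) ⊕ Fin (n2 + 1))

/-!
Write `M = T_{22}⋯T_{2n_2}`, so that the equation is `G + T_{21} M = 0` with `G` free of the
`T_{2j}`. For a variable `T_x` of `G`, the Jacobian derivation `M ∂_x - (∂G/∂T_x) ∂_{21}` kills the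
equation, is triangular hence locally nilpotent, and descends to `K[X]`; its exponential
`exp (t δ)` translates `T_x` by `t M` and fixes every other variable except `T_{21}`. On
`X(c_2,…,c_{n_2})` we have `M = ∏ c_j ≠ 0`, so these automorphisms move the coordinates of `G`,
one at a time, to any prescribed values; once they all agree, `T_{21}` is forced by the equation.

That `exp δ` is an automorphism is seen through the polynomial `∑ₙ (δⁿ a / n!) Tⁿ` in `T`, whose
value at `t` is `exp (t δ) a`: the Leibniz rule makes `a ↦ ∑ₙ (δⁿ a / n!) Tⁿ` multiplicative, and
its Taylor expansion gives `exp (s δ) ∘ exp (t δ) = exp ((s + t) δ)`.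
-/

open Finset

section Iterate

variable {K A : Type*} [CommRing K] [CommRing A] [Algebra K A] (δ : Derivation K A A)

theorem Derivation.iterate_map_mul (n : ℕ) (a b : A) :
    (⇑δ)^[n] (a * b) =
      ∑ p ∈ antidiagonal n, n.choose p.1 • ((⇑δ)^[p.1] a * (⇑δ)^[p.2] b) := by
  induction n with
  | zero => simp
  | succ n ih =>
    rw [sum_antidiagonal_choose_succ_nsmul (fun i j => (⇑δ)^[i] a * (⇑δ)^[j] b) n]
    simp only [Function.iterate_succ_apply', ih, map_sum, map_nsmul, Derivation.leibniz,
      smul_eq_mul, smul_add, sum_add_distrib]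
    congr 1
    refine sum_congr rfl fun p hp => ?_
    rw [n.choose_symm_of_eq_add (mem_antidiagonal.1 hp).symm]
    ring

theorem Derivation.iterate_smul_apply (t : K) (n : ℕ) (a : A) :
    (⇑(t • δ))^[n] a = t ^ n • (⇑δ)^[n] a := by
  induction n with
  | zero => simp
  | succ n ih =>
    rw [Function.iterate_succ_apply', ih, Derivation.smul_apply, map_smul,
      Function.iterate_succ_apply', smul_smul, pow_succ']

theorem Derivation.iterate_eq_zero_of_le_s18 {a : A} {m n : ℕ} (h : (⇑δ)^[m] a = 0) (hmn : m ≤ n) :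
    (⇑δ)^[n] a = 0 := by
  rw [← Nat.sub_add_cancel hmn, Function.iterate_add_apply, h, iterate_map_zero]

end Iterate

section LocallyNilpotent

variable {K A : Type*} [CommRing K] [CommRing A] [Algebra K A] {δ : Derivation K A A}

variable (δ) in
def Derivation.nilSubalgebra : Subalgebra K A where
  carrier := {a | ∃ n, (⇑δ)^[n] a = 0}
  mul_mem' := by
    rintro a b ⟨m, ha⟩ ⟨n, hb⟩
    refine ⟨m + n, ?_⟩
    rw [δ.iterate_map_mul]
    refine sum_eq_zero fun p hp => ?_
    rcases le_or_gt m p.1 with h | h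
    · rw [δ.iterate_eq_zero_of_le_s18 ha h, zero_mul, smul_zero]
    · have hn : n ≤ p.2 := by have := mem_antidiagonal.1 hp; omega
      rw [δ.iterate_eq_zero_of_le_s18 hb hn, mul_zero, smul_zero]
  add_mem' := by
    rintro a b ⟨m, ha⟩ ⟨n, hb⟩
    refine ⟨max m n, ?_⟩
    rw [iterate_map_add, δ.iterate_eq_zero_of_le_s18 ha (le_max_left m n),
      δ.iterate_eq_zero_of_le_s18 hb (le_max_right m n), add_zero]
  algebraMap_mem' r := ⟨1, δ.map_algebraMap r⟩

theorem Derivation.mem_nilSubalgebra_of_apply_mem {a : A} (h : δ a ∈ δ.nilSubalgebra) :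
    a ∈ δ.nilSubalgebra :=
  let ⟨n, hn⟩ := h
  ⟨n + 1, hn⟩

theorem isLND_of_adjoin_eq_top {s : Set A} (hs : Algebra.adjoin K s = ⊤)
    (h : s ⊆ δ.nilSubalgebra) : IsLND δ := fun _ =>
  (hs ▸ Algebra.adjoin_le h : (⊤ : Subalgebra K A) ≤ δ.nilSubalgebra) Algebra.mem_top

theorem IsLND.smul (hδ : IsLND δ) (t : K) : IsLND (t • δ) := fun a =>
  let ⟨n, hn⟩ := hδ a
  ⟨n, by rw [δ.iterate_smul_apply, hn, smul_zero]⟩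

theorem IsLND.of_surjective {B : Type*} [CommRing B] [Algebra K B] {δ' : Derivation K B B}
    (hδ : IsLND δ) (f : A →ₐ[K] B) (hf : Function.Surjective f)
    (hfδ : ∀ a, f (δ a) = δ' (f a)) : IsLND δ' := by
  intro b
  obtain ⟨a, rfl⟩ := hf b
  obtain ⟨n, hn⟩ := hδ a
  exact ⟨n, by rw [← (Function.Semiconj.iterate_right hfδ n) a, hn, map_zero]⟩

end LocallyNilpotent

section Exp

open scoped Nat

theorem inv_factorial_add_mul_choose (K : Type*) [Field K] [CharZero K] (i j : ℕ) :
    ((i + j)! : K)⁻¹ * (i + j).choose i = (i ! : K)⁻¹ * (j ! : K)⁻¹ := by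
  have h : ((i + j)! : K) ≠ 0 := Nat.cast_ne_zero.2 (Nat.factorial_ne_zero _)
  rw [Nat.cast_add_choose, inv_mul_eq_div, div_div_cancel_left' h, mul_inv]

variable {K A : Type*} [Field K] [CommRing A] [Algebra K A] {δ : Derivation K A A}

noncomputable def expPoly (hδ : IsLND δ) (a : A) : Polynomial A :=
  ∑ n ∈ range (hδ a).choose, Polynomial.monomial n ((n ! : K)⁻¹ • (⇑δ)^[n] a)

theorem coeff_expPoly (hδ : IsLND δ) (a : A) (n : ℕ) :
    (expPoly hδ a).coeff n = (n ! : K)⁻¹ • (⇑δ)^[n] a := by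
  simp only [expPoly, Polynomial.finsetSum_coeff, Polynomial.coeff_monomial, sum_ite_eq',
    mem_range]
  split_ifs with h
  · rfl
  · rw [δ.iterate_eq_zero_of_le_s18 (hδ a).choose_spec (not_lt.1 h), smul_zero]

theorem natDegree_expPoly_le (hδ : IsLND δ) {a : A} {N : ℕ} (h : (⇑δ)^[N] a = 0) :
    (expPoly hδ a).natDegree ≤ N :=
  Polynomial.natDegree_le_iff_coeff_eq_zero.2 fun n hn => by
    rw [coeff_expPoly, δ.iterate_eq_zero_of_le_s18 h hn.le, smul_zero]

theorem expPoly_add (hδ : IsLND δ) (a b : A) :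
    expPoly hδ (a + b) = expPoly hδ a + expPoly hδ b := by
  ext n
  simp only [Polynomial.coeff_add, coeff_expPoly, iterate_map_add, smul_add]

variable [CharZero K]

theorem LNDexp_eq_sum {a : A} {N : ℕ} (h : (⇑δ)^[N] a = 0) :
    LNDexp δ a = ∑ n ∈ range N, (n ! : K)⁻¹ • (⇑δ)^[n] a := by
  refine finsum_eq_finsetSum_of_support_subset _ fun n hn => ?_
  rw [coe_range, Set.mem_Iio]
  by_contra hNn
  exact hn (by simp only [δ.iterate_eq_zero_of_le_s18 h (not_lt.1 hNn), smul_zero])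

theorem LNDexp_eq_self_of_apply_eq_zero {a : A} (h : δ a = 0) : LNDexp δ a = a := by
  rw [LNDexp_eq_sum (N := 1) h]
  simp

theorem LNDexp_eq_add_of_apply_apply_eq_zero {a : A} (h : δ (δ a) = 0) :
    LNDexp δ a = a + δ a := by
  rw [LNDexp_eq_sum (N := 2) h]
  simp [sum_range_succ]

theorem LNDexp_smul_eq_eval (hδ : IsLND δ) (t : K) (a : A) :
    LNDexp (t • δ) a = (expPoly hδ a).eval (algebraMap K A t) := by
  obtain ⟨N, hN⟩ := hδ a
  have hN' : (⇑(t • δ))^[N + 1] a = 0 := by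
    rw [δ.iterate_smul_apply, δ.iterate_eq_zero_of_le_s18 hN N.le_succ, smul_zero]
  rw [Polynomial.eval_eq_sum_range' (Nat.lt_succ_of_le (natDegree_expPoly_le hδ hN)),
    LNDexp_eq_sum hN']
  refine sum_congr rfl fun n _ => ?_
  rw [coeff_expPoly, δ.iterate_smul_apply, ← map_pow, mul_comm, ← Algebra.smul_def, smul_comm]

theorem LNDexp_eq_eval (hδ : IsLND δ) (a : A) : LNDexp δ a = (expPoly hδ a).eval 1 := by
  simpa using LNDexp_smul_eq_eval hδ 1 a

theorem expPoly_mul (hδ : IsLND δ) (a b : A) :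
    expPoly hδ (a * b) = expPoly hδ a * expPoly hδ b := by
  ext n
  rw [coeff_expPoly, Polynomial.coeff_mul, δ.iterate_map_mul, smul_sum]
  refine sum_congr rfl fun p hp => ?_
  obtain rfl := mem_antidiagonal.1 hp
  rw [coeff_expPoly, coeff_expPoly, smul_mul_smul_comm, ← Nat.cast_smul_eq_nsmul K, smul_smul,
    inv_factorial_add_mul_choose]

theorem hasseDeriv_expPoly (hδ : IsLND δ) (a : A) (m : ℕ) :
    Polynomial.hasseDeriv m (expPoly hδ a) = (m ! : K)⁻¹ • expPoly hδ ((⇑δ)^[m] a) := by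
  ext n
  rw [Polynomial.hasseDeriv_coeff, Polynomial.coeff_smul, coeff_expPoly, coeff_expPoly,
    ← Function.iterate_add_apply, ← nsmul_eq_mul, ← Nat.cast_smul_eq_nsmul K, smul_smul,
    smul_smul, mul_comm, ← Nat.choose_symm_add, inv_factorial_add_mul_choose, mul_comm]

variable (δ) in
noncomputable def expAlgHom (hδ : IsLND δ) : A →ₐ[K] A where
  toFun := LNDexp δ
  map_one' := LNDexp_eq_self_of_apply_eq_zero δ.map_one_eq_zero
  map_mul' a b := by simp only [LNDexp_eq_eval hδ, expPoly_mul, Polynomial.eval_mul]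
  map_zero' := LNDexp_eq_self_of_apply_eq_zero (map_zero δ)
  map_add' a b := by simp only [LNDexp_eq_eval hδ, expPoly_add, Polynomial.eval_add]
  commutes' r := LNDexp_eq_self_of_apply_eq_zero (δ.map_algebraMap r)

theorem expAlgHom_apply (hδ : IsLND δ) (a : A) : expAlgHom δ hδ a = LNDexp δ a := rfl

theorem LNDexp_smul_LNDexp_smul (hδ : IsLND δ) (s t : K) (a : A) :
    LNDexp (s • δ) (LNDexp (t • δ) a) = LNDexp ((t + s) • δ) a := by
  obtain ⟨N, hN⟩ := hδ a
  have hN' : (⇑(t • δ))^[N + 1] a = 0 := by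
    rw [δ.iterate_smul_apply, δ.iterate_eq_zero_of_le_s18 hN N.le_succ, smul_zero]
  have hdeg : (Polynomial.taylor (algebraMap K A s) (expPoly hδ a)).natDegree < N + 1 := by
    rw [Polynomial.natDegree_taylor]
    exact Nat.lt_succ_of_le (natDegree_expPoly_le hδ hN)
  rw [LNDexp_smul_eq_eval hδ (t + s), map_add, ← Polynomial.taylor_eval,
    Polynomial.eval_eq_sum_range' hdeg, LNDexp_eq_sum hN', ← expAlgHom_apply (hδ.smul s),
    map_sum]
  -- the Taylor coefficients of `expPoly hδ a` at `s` are `exp (s δ) (δᵐ a) / m!`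
  refine sum_congr rfl fun m _ => ?_
  rw [Polynomial.taylor_coeff, hasseDeriv_expPoly, Polynomial.eval_smul,
    ← LNDexp_smul_eq_eval, δ.iterate_smul_apply, smul_smul, map_smul, expAlgHom_apply,
    ← map_pow, ← Algebra.commutes, ← Algebra.smul_def, smul_smul, mul_comm]

variable (δ) in
noncomputable def expAlgEquiv (hδ : IsLND δ) : A ≃ₐ[K] A :=
  AlgEquiv.ofAlgHom (expAlgHom δ hδ) (expAlgHom _ (hδ.smul (-1)))
    (AlgHom.ext fun a => by
      simpa [expAlgHom_apply, LNDexp_eq_self_of_apply_eq_zero] using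
        LNDexp_smul_LNDexp_smul hδ 1 (-1) a)
    (AlgHom.ext fun a => by
      simpa [expAlgHom_apply, LNDexp_eq_self_of_apply_eq_zero] using
        LNDexp_smul_LNDexp_smul hδ (-1) 1 a)

theorem expAlgEquiv_mem_SAut (hδ : IsLND δ) : expAlgEquiv δ hδ ∈ SAut K A :=
  Subgroup.subset_closure ⟨δ, hδ, fun _ => rfl⟩

end Exp

section Quotient

variable {K A : Type*} [Field K] [CharZero K] [CommRing A] [Algebra K A] {δ : Derivation K A A}

theorem LNDexp_map_of_semiconj {B : Type*} [CommRing B] [Algebra K B] {δ' : Derivation K B B}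
    (hδ : IsLND δ) (f : A →ₐ[K] B) (hf : ∀ a, f (δ a) = δ' (f a)) (a : A) :
    LNDexp δ' (f a) = f (LNDexp δ a) := by
  obtain ⟨N, hN⟩ := hδ a
  have hiter (n : ℕ) : (⇑δ')^[n] (f a) = f ((⇑δ)^[n] a) :=
    ((Function.Semiconj.iterate_right hf n) a).symm
  rw [LNDexp_eq_sum hN, LNDexp_eq_sum (N := N) (by rw [hiter, hN, map_zero]), map_sum]
  simp only [hiter, map_smul]

theorem exists_mem_SAut_quotient_mk (hδ : IsLND δ) (I : Ideal A) (hI : ∀ a ∈ I, δ a ∈ I) :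
    ∃ φ ∈ SAut K (A ⧸ I), ∀ a, φ (Ideal.Quotient.mk I a) = Ideal.Quotient.mk I (LNDexp δ a) := by
  have hker : ∀ a, Ideal.Quotient.mkₐ K I a = 0 → Ideal.Quotient.mkₐ K I (δ a) = 0 := by
    simpa [Ideal.Quotient.eq_zero_iff_mem] using hI
  set δ' := δ.liftOfSurjective (Ideal.Quotient.mkₐ_surjective K I) hker
  have hδ' (a : A) : Ideal.Quotient.mkₐ K I (δ a) = δ' (Ideal.Quotient.mkₐ K I a) :=
    (Derivation.liftOfSurjective_apply _ hker a).symm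
  have hlnd : IsLND δ' := hδ.of_surjective _ (Ideal.Quotient.mkₐ_surjective K I) hδ'
  exact ⟨expAlgEquiv δ' hlnd, expAlgEquiv_mem_SAut hlnd,
    fun a => LNDexp_map_of_semiconj hδ (Ideal.Quotient.mkₐ K I) hδ' a⟩

end Quotient

section Jacobian

variable {σ R : Type*} [CommRing R]

theorem MvPolynomial.pderiv_mem_supported {s : Set σ} {p : MvPolynomial σ R}
    (hp : p ∈ supported R s) (i : σ) : pderiv i p ∈ supported R s := by
  rw [supported_eq_adjoin_X] at hp ⊢
  induction hp using Algebra.adjoin_induction with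
  | mem q hq =>
    obtain ⟨v, -, rfl⟩ := hq
    by_cases hv : v = i
    · rw [hv, pderiv_X_self]
      exact one_mem _
    · rw [pderiv_X_of_ne hv]
      exact zero_mem _
  | algebraMap r =>
    rw [Derivation.map_algebraMap]
    exact zero_mem _
  | add p q _ _ hp hq =>
    rw [map_add]
    exact add_mem hp hq
  | mul p q hp' hq' hp hq =>
    rw [Derivation.leibniz, smul_eq_mul, smul_eq_mul]
    exact add_mem (mul_mem hp' hq) (mul_mem hq' hp)

theorem MvPolynomial.pderiv_eq_zero_of_mem_supported {s : Set σ} {p : MvPolynomial σ R}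
    (hp : p ∈ supported R s) {i : σ} (hi : i ∉ s) : pderiv i p = 0 :=
  pderiv_eq_zero_of_notMem_vars fun h => hi (mem_supported.1 hp h)

noncomputable def jacobianDerivation (x y : σ) (F : MvPolynomial σ R) :
    Derivation R (MvPolynomial σ R) (MvPolynomial σ R) :=
  pderiv y F • pderiv x - pderiv x F • pderiv y

theorem jacobianDerivation_apply (x y : σ) (F g : MvPolynomial σ R) :
    jacobianDerivation x y F g = pderiv y F * pderiv x g - pderiv x F * pderiv y g :=
  rfl

theorem jacobianDerivation_self (x y : σ) (F : MvPolynomial σ R) :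
    jacobianDerivation x y F F = 0 := by
  rw [jacobianDerivation_apply, mul_comm, sub_self]

variable {x y : σ} {W : Set σ} {G M : MvPolynomial σ R}

theorem pderiv_add_X_mul_self (hyW : y ∉ W) (hG : G ∈ supported R {y}ᶜ)
    (hM : M ∈ supported R W) : pderiv y (G + X y * M) = M := by
  rw [map_add, Derivation.leibniz, pderiv_eq_zero_of_mem_supported hG (by simp),
    pderiv_eq_zero_of_mem_supported hM hyW, pderiv_X_self, smul_zero, smul_eq_mul, mul_one,
    zero_add, zero_add]

theorem pderiv_add_X_mul_of_ne (hxy : x ≠ y) (hxW : x ∉ W) (hM : M ∈ supported R W) :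
    pderiv x (G + X y * M) = pderiv x G := by
  rw [map_add, Derivation.leibniz, pderiv_eq_zero_of_mem_supported hM hxW,
    pderiv_X_of_ne hxy.symm, smul_zero, smul_zero, add_zero, add_zero]

theorem jacobianDerivation_eq_zero_of_mem_supported (F : MvPolynomial σ R) {s : Set σ}
    {p : MvPolynomial σ R} (hp : p ∈ supported R s) (hx : x ∉ s) (hy : y ∉ s) :
    jacobianDerivation x y F p = 0 := by
  rw [jacobianDerivation_apply, pderiv_eq_zero_of_mem_supported hp hx,
    pderiv_eq_zero_of_mem_supported hp hy, mul_zero, mul_zero, sub_zero]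

theorem jacobianDerivation_X_of_ne (F : MvPolynomial σ R) {v : σ} (hx : v ≠ x) (hy : v ≠ y) :
    jacobianDerivation x y F (X v) = 0 := by
  rw [jacobianDerivation_apply, pderiv_X_of_ne hx, pderiv_X_of_ne hy, mul_zero, mul_zero,
    sub_zero]

theorem jacobianDerivation_X_left (hxy : x ≠ y) (hyW : y ∉ W) (hG : G ∈ supported R {y}ᶜ)
    (hM : M ∈ supported R W) : jacobianDerivation x y (G + X y * M) (X x) = M := by
  rw [jacobianDerivation_apply, pderiv_add_X_mul_self hyW hG hM, pderiv_X_self,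
    pderiv_X_of_ne hxy, mul_one, mul_zero, sub_zero]

theorem jacobianDerivation_X_right (hxy : x ≠ y) (hxW : x ∉ W) (hM : M ∈ supported R W) :
    jacobianDerivation x y (G + X y * M) (X y) = -pderiv x G := by
  rw [jacobianDerivation_apply, pderiv_X_of_ne hxy.symm, pderiv_X_self,
    pderiv_add_X_mul_of_ne hxy hxW hM, mul_zero, mul_one, zero_sub]

/-- The derivation is triangular: it sends `T_x` to `M`, which it kills, fixes the other
variables except `T_y`, and sends `T_y` into the polynomials free of `T_y`. -/
theorem isLND_jacobianDerivation (hxy : x ≠ y) (hxW : x ∉ W) (hyW : y ∉ W)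
    (hG : G ∈ supported R {y}ᶜ) (hM : M ∈ supported R W) :
    IsLND (jacobianDerivation x y (G + X y * M)) := by
  set D := jacobianDerivation x y (G + X y * M)
  have hX (v : σ) (hv : v ≠ y) : X v ∈ D.nilSubalgebra := by
    by_cases hvx : v = x
    · subst hvx
      refine ⟨2, ?_⟩
      change D (D (X v)) = 0
      rw [jacobianDerivation_X_left hxy hyW hG hM]
      exact jacobianDerivation_eq_zero_of_mem_supported _ hM hxW hyW
    · exact ⟨1, jacobianDerivation_X_of_ne _ hvx hv⟩
  have hfree : supported R {y}ᶜ ≤ D.nilSubalgebra := by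
    rw [supported_eq_adjoin_X]
    exact Algebra.adjoin_le (by rintro _ ⟨v, hv, rfl⟩; exact hX v hv)
  refine isLND_of_adjoin_eq_top adjoin_range_X ?_
  rintro _ ⟨v, rfl⟩
  by_cases hvy : v = y
  · subst hvy
    refine Derivation.mem_nilSubalgebra_of_apply_mem (hfree ?_)
    rw [jacobianDerivation_X_right hxy hxW hM]
    exact neg_mem (pderiv_mem_supported hG x)
  · exact hX v hvy

end Jacobian

section Orbit

variable {σ K : Type*} [Field K] {x y : σ} {W : Set σ} {G M : MvPolynomial σ K}

theorem apply_mk_eq_of_mem_supported {R B : Type*} [CommRing R] [CommRing B] [Algebra R B]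
    {I : Ideal (MvPolynomial σ R)} {f g : (MvPolynomial σ R ⧸ I) →ₐ[R] B} {s : Set σ}
    (h : ∀ v ∈ s, f (Ideal.Quotient.mk I (X v)) = g (Ideal.Quotient.mk I (X v)))
    {p : MvPolynomial σ R} (hp : p ∈ supported R s) :
    f (Ideal.Quotient.mk I p) = g (Ideal.Quotient.mk I p) := by
  have hle : supported R s ≤
      AlgHom.equalizer (f.comp (Ideal.Quotient.mkₐ R I)) (g.comp (Ideal.Quotient.mkₐ R I)) := by
    rw [supported_eq_adjoin_X]
    exact Algebra.adjoin_le (by rintro _ ⟨v, hv, rfl⟩; exact h v hv)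
  exact hle hp

theorem eq_of_apply_X_eq (hyW : y ∉ W) (hG : G ∈ supported K {y}ᶜ) (hM : M ∈ supported K W)
    {f g : (MvPolynomial σ K ⧸ Ideal.span {G + X y * M}) →ₐ[K] K}
    (h : ∀ v ∈ ({y}ᶜ : Set σ), f (Ideal.Quotient.mk _ (X v)) = g (Ideal.Quotient.mk _ (X v)))
    (hgM : g (Ideal.Quotient.mk _ M) ≠ 0) : f = g := by
  have hfG := apply_mk_eq_of_mem_supported h hG
  have hfM := apply_mk_eq_of_mem_supported h
    (supported_mono (Set.subset_compl_singleton_iff.2 hyW) hM)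
  have hF (k : (MvPolynomial σ K ⧸ Ideal.span {G + X y * M}) →ₐ[K] K) :
      k (Ideal.Quotient.mk _ G) + k (Ideal.Quotient.mk _ (X y)) * k (Ideal.Quotient.mk _ M) =
        0 := by
    rw [← map_mul, ← map_add, ← map_mul, ← map_add,
      Ideal.Quotient.eq_zero_iff_mem.2 (Ideal.mem_span_singleton_self _), map_zero]
  have hy : f (Ideal.Quotient.mk _ (X y)) = g (Ideal.Quotient.mk _ (X y)) := by
    have hf := hF f
    rw [hfG, hfM] at hf
    exact mul_right_cancel₀ hgM (by linear_combination hf - hF g)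
  apply Ideal.Quotient.algHom_ext
  refine MvPolynomial.algHom_ext fun v => ?_
  by_cases hv : v = y
  · subst hv
    exact hy
  · exact h v hv

variable [CharZero K]

theorem exists_mem_SAut_translate (hxy : x ≠ y) (hxW : x ∉ W) (hyW : y ∉ W)
    (hG : G ∈ supported K {y}ᶜ) (hM : M ∈ supported K W) (t : K) :
    ∃ φ ∈ SAut K (MvPolynomial σ K ⧸ Ideal.span {G + X y * M}),
      φ (Ideal.Quotient.mk _ (X x)) = Ideal.Quotient.mk _ (X x + t • M) ∧
      ∀ v, v ≠ x → v ≠ y → φ (Ideal.Quotient.mk _ (X v)) = Ideal.Quotient.mk _ (X v) := by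
  set D := t • jacobianDerivation x y (G + X y * M)
  have hI : ∀ a ∈ Ideal.span {G + X y * M}, D a ∈ Ideal.span {G + X y * M} := by
    intro a ha
    obtain ⟨b, rfl⟩ := Ideal.mem_span_singleton'.1 ha
    rw [Derivation.leibniz, Derivation.smul_apply, jacobianDerivation_self, smul_zero, smul_zero,
      zero_add, smul_eq_mul]
    exact Ideal.mul_mem_right _ _ (Ideal.mem_span_singleton_self _)
  obtain ⟨φ, hφ, hφmk⟩ := exists_mem_SAut_quotient_mk
    ((isLND_jacobianDerivation hxy hxW hyW hG hM).smul t) _ hI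
  have hDx : D (X x) = t • M := by
    rw [Derivation.smul_apply, jacobianDerivation_X_left hxy hyW hG hM]
  refine ⟨φ, hφ, ?_, fun v hvx hvy => ?_⟩
  · have hDDx : D (D (X x)) = 0 := by
      rw [hDx, D.map_smul, Derivation.smul_apply,
        jacobianDerivation_eq_zero_of_mem_supported _ hM hxW hyW, smul_zero, smul_zero]
    rw [hφmk, LNDexp_eq_add_of_apply_apply_eq_zero hDDx, hDx]
  · rw [hφmk, LNDexp_eq_self_of_apply_eq_zero]
    rw [Derivation.smul_apply, jacobianDerivation_X_of_ne _ hvx hvy, smul_zero]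

theorem exists_mem_SAut_apply_X_eq (hxy : x ≠ y) (hxW : x ∉ W) (hyW : y ∉ W)
    (hG : G ∈ supported K {y}ᶜ) (hM : M ∈ supported K W)
    (P : (MvPolynomial σ K ⧸ Ideal.span {G + X y * M}) →ₐ[K] K)
    (hPM : P (Ideal.Quotient.mk _ M) ≠ 0) (c : K) :
    ∃ φ ∈ SAut K (MvPolynomial σ K ⧸ Ideal.span {G + X y * M}),
      P (φ (Ideal.Quotient.mk _ (X x))) = c ∧
      ∀ v, v ≠ x → v ≠ y → P (φ (Ideal.Quotient.mk _ (X v))) = P (Ideal.Quotient.mk _ (X v)) := by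
  obtain ⟨φ, hφ, hφx, hφv⟩ := exists_mem_SAut_translate hxy hxW hyW hG hM
    ((c - P (Ideal.Quotient.mk _ (X x))) / P (Ideal.Quotient.mk _ M))
  refine ⟨φ, hφ, ?_, fun v hvx hvy => by rw [hφv v hvx hvy]⟩
  rw [hφx, ← Ideal.Quotient.mkₐ_eq_mk K, map_add, map_smul, map_add, map_smul, smul_eq_mul,
    Ideal.Quotient.mkₐ_eq_mk, div_mul_cancel₀ _ hPM, add_sub_cancel]

theorem exists_mem_SAut_apply_X_eq_of_mem (hyW : y ∉ W) (hG : G ∈ supported K {y}ᶜ)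
    (hM : M ∈ supported K W) (P Q : (MvPolynomial σ K ⧸ Ideal.span {G + X y * M}) →ₐ[K] K)
    (hPQ : ∀ v ∈ W, P (Ideal.Quotient.mk _ (X v)) = Q (Ideal.Quotient.mk _ (X v)))
    (hQM : Q (Ideal.Quotient.mk _ M) ≠ 0) (s : Finset σ) :
    ∃ φ ∈ SAut K (MvPolynomial σ K ⧸ Ideal.span {G + X y * M}), ∀ v, v ≠ y → v ∈ s ∨ v ∈ W →
      P (φ (Ideal.Quotient.mk _ (X v))) = Q (Ideal.Quotient.mk _ (X v)) := by
  classical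
  induction s using Finset.induction_on with
  | empty => exact ⟨1, one_mem _, fun v _ hv => hPQ v (by simpa using hv)⟩
  | insert x s hxs ih =>
    obtain ⟨φ, hφ, hφQ⟩ := ih
    by_cases hx : x ∈ W ∨ x = y
    · refine ⟨φ, hφ, fun v hvy hv => hφQ v hvy ?_⟩
      rw [mem_insert] at hv
      rcases hv with (rfl | hv) | hv <;> tauto
    rw [not_or] at hx
    set P' := P.comp φ.toAlgHom
    have hP'M : P' (Ideal.Quotient.mk _ M) ≠ 0 := by
      rwa [apply_mk_eq_of_mem_supported (g := Q)
        (fun v hv => hφQ v (ne_of_mem_of_not_mem hv hyW) (Or.inr hv)) hM]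
    obtain ⟨ψ, hψ, hψx, hψv⟩ :=
      exists_mem_SAut_apply_X_eq hx.2 hx.1 hyW hG hM P' hP'M (Q (Ideal.Quotient.mk _ (X x)))
    refine ⟨φ * ψ, mul_mem hφ hψ, fun v hvy hv => ?_⟩
    by_cases hvx : v = x
    · subst hvx
      exact hψx
    · rw [mem_insert] at hv
      exact (hψv v hvx hvy).trans (hφQ v hvy (by tauto))

theorem exists_mem_SAut_comp_eq [Fintype σ] (hyW : y ∉ W) (hG : G ∈ supported K {y}ᶜ)
    (hM : M ∈ supported K W) (P Q : (MvPolynomial σ K ⧸ Ideal.span {G + X y * M}) →ₐ[K] K)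
    (hPQ : ∀ v ∈ W, P (Ideal.Quotient.mk _ (X v)) = Q (Ideal.Quotient.mk _ (X v)))
    (hQM : Q (Ideal.Quotient.mk _ M) ≠ 0) :
    ∃ φ ∈ SAut K (MvPolynomial σ K ⧸ Ideal.span {G + X y * M}), ∀ a, Q a = P (φ a) := by
  obtain ⟨φ, hφ, hφQ⟩ := exists_mem_SAut_apply_X_eq_of_mem hyW hG hM P Q hPQ hQM univ
  have hPφ : P.comp φ.toAlgHom = Q :=
    eq_of_apply_X_eq hyW hG hM (fun v hv => hφQ v hv (Or.inl (mem_univ v))) hQM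
  exact ⟨φ, hφ, fun a => by rw [← hPφ]; rfl⟩

end Orbit

theorem stmt18_general {K : Type*} [Field K] [CharZero K]
    (n0 n1 n2 : ℕ)
    (l0 : Fin n0 → ℕ) (l1 : Fin (n1 + 1) → ℕ)
    (T0 T1 T2 : MvPolynomial (TriIdx18 n0 n1 n2) K)
    (hT0 : T0 = ∏ j, X (Sum.inl j) ^ l0 j)
    (hT1 : T1 = ∏ j, X (Sum.inr (Sum.inl j)) ^ l1 j)
    (hT2 : T2 = ∏ j, X (Sum.inr (Sum.inr j)))
    (I : Ideal (MvPolynomial (TriIdx18 n0 n1 n2) K))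
    (hI : I = Ideal.span {T0 + T1 + T2})
    (c : Fin (n2 + 1) → K) (hc : ∀ j : Fin (n2 + 1), j ≠ 0 → c j ≠ 0)
    -- two points of `X(c_2,…,c_{n_2})`, i.e. `K`-points of `X` with `T_{2j} = c_j` for `j ≥ 2`
    (P Q : (MvPolynomial (TriIdx18 n0 n1 n2) K ⧸ I) →ₐ[K] K)
    (hP : ∀ j : Fin (n2 + 1), j ≠ 0 →
      P (Ideal.Quotient.mk I (X (Sum.inr (Sum.inr j)))) = c j)
    (hQ : ∀ j : Fin (n2 + 1), j ≠ 0 →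
      Q (Ideal.Quotient.mk I (X (Sum.inr (Sum.inr j)))) = c j) :
    ∃ φ ∈ SAut K (MvPolynomial (TriIdx18 n0 n1 n2) K ⧸ I),
      ∀ a, Q a = P (φ a) := by
  set y : TriIdx18 n0 n1 n2 := Sum.inr (Sum.inr 0)
  set W : Set (TriIdx18 n0 n1 n2) := {v | ∃ j ≠ 0, v = Sum.inr (Sum.inr j)}
  set M : MvPolynomial (TriIdx18 n0 n1 n2) K := ∏ j ∈ univ.erase 0, X (Sum.inr (Sum.inr j))
  have hyW : y ∉ W := by
    rintro ⟨j, hj, h⟩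
    exact hj (by simpa [y] using h.symm)
  have hG : T0 + T1 ∈ supported K {y}ᶜ := by
    rw [hT0, hT1]
    exact add_mem (prod_mem fun j _ => pow_mem (X_mem_supported.2 (by simp [y])) _)
      (prod_mem fun j _ => pow_mem (X_mem_supported.2 (by simp [y])) _)
  have hM : M ∈ supported K W :=
    prod_mem fun j hj => X_mem_supported.2 ⟨j, (mem_erase.1 hj).1, rfl⟩
  obtain rfl : I = Ideal.span {(T0 + T1) + X y * M} := by
    rw [hI, hT2, ← mul_prod_erase univ _ (mem_univ 0), add_assoc]
  have hQM : Q (Ideal.Quotient.mk _ M) ≠ 0 := by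
    rw [map_prod, map_prod]
    exact prod_ne_zero_iff.2 fun j hj => (hQ j (mem_erase.1 hj).1).symm ▸ hc j (mem_erase.1 hj).1
  exact exists_mem_SAut_comp_eq hyW hG hM P Q (by rintro v ⟨j, hj, rfl⟩; rw [hP j hj, hQ j hj]) hQM

theorem stmt18 {K : Type*} [Field K] [IsAlgClosed K] [CharZero K]
    (n0 n1 n2 : ℕ)
    (l0 : Fin n0 → ℕ) (l1 : Fin (n1 + 1) → ℕ)
    (hl0 : ∀ j, 0 < l0 j) (hl1 : ∀ j, 0 < l1 j)
    (T0 T1 T2 : MvPolynomial (TriIdx18 n0 n1 n2) K)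
    (hT0 : T0 = ∏ j, X (Sum.inl j) ^ l0 j)
    (hT1 : T1 = ∏ j, X (Sum.inr (Sum.inl j)) ^ l1 j)
    (hT2 : T2 = ∏ j, X (Sum.inr (Sum.inr j)))
    (I : Ideal (MvPolynomial (TriIdx18 n0 n1 n2) K))
    (hI : I = Ideal.span {T0 + T1 + T2})
    (c : Fin (n2 + 1) → K) (hc : ∀ j : Fin (n2 + 1), j ≠ 0 → c j ≠ 0)
    -- two points of `X(c_2,…,c_{n_2})`, i.e. `K`-points of `X` with `T_{2j} = c_j` for `j ≥ 2`
    (P Q : (MvPolynomial (TriIdx18 n0 n1 n2) K ⧸ I) →ₐ[K] K)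
    (hP : ∀ j : Fin (n2 + 1), j ≠ 0 →
      P (Ideal.Quotient.mk I (X (Sum.inr (Sum.inr j)))) = c j)
    (hQ : ∀ j : Fin (n2 + 1), j ≠ 0 →
      Q (Ideal.Quotient.mk I (X (Sum.inr (Sum.inr j)))) = c j) :
    ∃ φ ∈ SAut K (MvPolynomial (TriIdx18 n0 n1 n2) K ⧸ I),
      ∀ a, Q a = P (φ a) :=
  stmt18_general n0 n1 n2 l0 l1 T0 T1 T2 hT0 hT1 hT2 I hI c hc P Q hP hQ
end
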